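/- arXiv:1506.02835 — 5 statements merged into one kernel-verified Lean document; each statement's English description precedes it below -/
import Mathlib

section
/- Let β ∈ (0,1], a ≥ 0, b ≥ 1 and c > 0, and let f be a solution of the equation f''' + f·f'' + β·f'·(f'−1) = 0 on [0, +∞) with f(0) = a, f'(0) = b and f''(0) = c. Then there exists t₀ > 0 such that f'' > 0 on [0, t₀), f''(t₀) = 0, f'' < 0 on (t₀, +∞), and f'(t) → 1 as t → +∞ (so f is a convex-concave solution of the boundary value problem with f'(+∞) = 1). -/
open Set Filter Topology


private lemma slope_right_neg {g : ℝ → ℝ} {u : ℝ} (hg : DifferentiableAt ℝ g u)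
    (h0 : g u = 0) (hd : deriv g u < 0) : ∀ᶠ t in 𝓝[>] u, g t < 0 := by
  have hs : Tendsto (slope g u) (𝓝[>] u) (𝓝 (deriv g u)) :=
    (hasDerivAt_iff_tendsto_slope.1 hg.hasDerivAt).mono_left
      (nhdsWithin_mono u (fun t ht => ne_of_gt ht))
  have h1 : ∀ᶠ t in 𝓝[>] u, slope g u t < 0 := hs.eventually_lt_const hd
  filter_upwards [h1, self_mem_nhdsWithin] with t ht (htu : u < t)
  rw [slope_def_field, div_neg_iff] at ht
  rcases ht with ⟨h1, h2⟩ | ⟨h1, h2⟩ <;> linarith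

private lemma deriv_nonneg_left {g : ℝ → ℝ} {u : ℝ} (hg : DifferentiableAt ℝ g u)
    (h0 : g u = 0) (hle : ∀ᶠ t in 𝓝[<] u, g t ≤ 0) : 0 ≤ deriv g u := by
  have hs : Tendsto (slope g u) (𝓝[<] u) (𝓝 (deriv g u)) :=
    (hasDerivAt_iff_tendsto_slope.1 hg.hasDerivAt).mono_left
      (nhdsWithin_mono u (fun t ht => ne_of_lt ht))
  refine ge_of_tendsto hs ?_
  filter_upwards [hle, self_mem_nhdsWithin] with t ht (htu : t < u)
  rw [slope_def_field]
  have h1 : g t - g u ≤ 0 := by linarith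
  have h2 : t - u ≤ 0 := by linarith
  exact div_nonneg_iff.mpr (Or.inr ⟨h1, h2⟩)

private lemma stay_nonpos {h : ℝ → ℝ} {T s : ℝ} (hd : Differentiable ℝ h)
    (hT : h T ≤ 0) (hz : ∀ t ∈ Icc T s, h t = 0 → deriv h t < 0) :
    ∀ t ∈ Icc T s, h t ≤ 0 := by
  by_contra hcon
  push_neg at hcon
  obtain ⟨s', hs', hpos⟩ := hcon
  set A := {t | t ∈ Icc T s' ∧ h t ≤ 0} with hA
  have hclosed : IsClosed A := (isClosed_Icc.inter (isClosed_le hd.continuous continuous_const))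
  have hne : A.Nonempty := ⟨T, ⟨le_refl T, hs'.1⟩, hT⟩
  have hbdd : BddAbove A := ⟨s', fun t ht => ht.1.2⟩
  set u := sSup A with hu
  have huA : u ∈ A := hclosed.csSup_mem hne hbdd
  have hus : u ≤ s' := huA.1.2
  have hune : u ≠ s' := fun h' => absurd (h' ▸ huA.2) (not_le.mpr hpos)
  have hult : u < s' := lt_of_le_of_ne hus hune
  have hgt : ∀ t, u < t → t ≤ s' → 0 < h t := by
    intro t h1 h2
    by_contra h3
    exact absurd (le_csSup hbdd ⟨⟨le_trans huA.1.1 (le_of_lt h1), h2⟩, not_lt.mp h3⟩) (not_le.mpr h1)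
  have hu0 : h u = 0 := by
    refine le_antisymm huA.2 ?_
    have hcont : Tendsto h (𝓝[>] u) (𝓝 (h u)) :=
      (hd.continuous.continuousAt).continuousWithinAt.tendsto
    refine ge_of_tendsto hcont ?_
    filter_upwards [Ioc_mem_nhdsGT_of_mem ⟨le_refl u, hult⟩] with t ht
    exact le_of_lt (hgt t ht.1 ht.2)
  have hder : deriv h u < 0 := hz u ⟨huA.1.1, le_trans hus hs'.2⟩ hu0
  have hev : ∀ᶠ t in 𝓝[>] u, h t < 0 := slope_right_neg (hd u) hu0 hder
  have hev2 : ∀ᶠ t in 𝓝[>] u, 0 < h t := by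
    filter_upwards [Ioc_mem_nhdsGT_of_mem ⟨le_refl u, hult⟩] with t ht
    exact hgt t ht.1 ht.2
  obtain ⟨t, h1, h2⟩ := (hev.and hev2).exists
  linarith

private lemma anti_of_deriv {g : ℝ → ℝ} {T : ℝ} (hd : Differentiable ℝ g)
    (h : ∀ t ∈ Ioi T, deriv g t ≤ 0) : AntitoneOn g (Ici T) := by
  refine antitoneOn_of_deriv_nonpos (convex_Ici T) hd.continuous.continuousOn
    hd.differentiableOn ?_
  rwa [interior_Ici]

private lemma mono_of_deriv {g : ℝ → ℝ} {T : ℝ} (hd : Differentiable ℝ g)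
    (h : ∀ t ∈ Ioi T, 0 ≤ deriv g t) : MonotoneOn g (Ici T) := by
  refine monotoneOn_of_deriv_nonneg (convex_Ici T) hd.continuous.continuousOn
    hd.differentiableOn ?_
  rwa [interior_Ici]

private lemma stepA_lemma (β a b c : ℝ) (hβ1 : 0 < β) (hβ2 : β ≤ 1) (ha : 0 ≤ a)
    (hb : 1 ≤ b) (hc : 0 < c) (f f1 f2 : ℝ → ℝ)
    (hdf : Differentiable ℝ f) (hdf1 : Differentiable ℝ f1) (hdf2 : Differentiable ℝ f2)
    (hf1def : f1 = deriv f) (hf2def : f2 = deriv f1)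
    (heq' : ∀ t, 0 ≤ t → deriv f2 t = -(f t * f2 t) - β * (f1 t * (f1 t - 1)))
    (key_ineq : ∀ x y : ℝ, 1 ≤ y → y ≤ x → y * (y - 1) ≤ x * (x - 1))
    (h0 : f 0 = a) (h0' : f1 0 = b) (h0'' : f2 0 = c) :
    ∃ t, 0 ≤ t ∧ f2 t ≤ 0 := by
  by_contra hcon
  push_neg at hcon
  have hcon' : ∀ t, 0 ≤ t → 0 < f2 t := fun t ht => hcon t ht
  have hf1mono : StrictMonoOn f1 (Ici (0:ℝ)) := by
    refine strictMonoOn_of_deriv_pos (convex_Ici 0) hdf1.continuous.continuousOn ?_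
    rw [interior_Ici]
    intro x hx
    rw [← hf2def]
    exact hcon' x (le_of_lt hx)
  have hf1ge : ∀ t, 0 ≤ t → b ≤ f1 t := by
    intro t ht
    rcases eq_or_lt_of_le ht with h | h
    · rw [← h, h0']
    · rw [← h0']; exact le_of_lt (hf1mono (mem_Ici.mpr (le_refl 0)) (mem_Ici.mpr ht) h)
  have hfge : ∀ t, 0 ≤ t → 0 ≤ f t := by
    intro t ht
    have hm : MonotoneOn f (Ici (0:ℝ)) := by
      refine mono_of_deriv hdf ?_
      intro s hs
      rw [← hf1def]
      have := hf1ge s (le_of_lt hs)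
      linarith
    have := hm (mem_Ici.mpr (le_refl 0)) (mem_Ici.mpr ht) ht
    rw [h0] at this
    linarith
  set b₁ := f1 1 with hb₁def
  have hb₁ : b < b₁ := by rw [← h0']; exact hf1mono (mem_Ici.mpr (le_refl 0)) (by norm_num) one_pos
  set m := b₁ * (b₁ - 1) with hmdef
  have hm : 0 < m := by nlinarith
  have hd2 : ∀ t, 1 ≤ t → deriv f2 t ≤ -(β * m) := by
    intro t ht
    have h1 : 0 ≤ t := by linarith
    have h2 : m ≤ f1 t * (f1 t - 1) := by
      refine key_ineq _ _ (by linarith) ?_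
      rcases eq_or_lt_of_le ht with h | h
      · rw [← h]
      · exact le_of_lt (hf1mono (by norm_num) h1 h)
    have h3 : 0 ≤ f t * f2 t := mul_nonneg (hfge t h1) (le_of_lt (hcon' t h1))
    rw [heq' t h1]
    nlinarith
  set g := fun t => f2 t + β * m * t with hgdef
  have hganti : AntitoneOn g (Ici (1:ℝ)) := by
    refine anti_of_deriv (hdf2.add ((differentiable_id.const_mul _))) ?_
    intro t ht
    have hdg : HasDerivAt g (deriv f2 t + β * m * 1) t :=
      (hdf2 t).hasDerivAt.add ((hasDerivAt_id t).const_mul (β * m))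
    rw [hdg.deriv]
    have := hd2 t (le_of_lt ht)
    linarith
  obtain ⟨s, hsdef⟩ : ∃ s, s = 1 + f2 1 / (β * m) := ⟨_, rfl⟩
  have hs1 : 1 ≤ s := by
    have h5 := hcon' 1 (by norm_num)
    have h6 : 0 ≤ f2 1 / (β * m) := le_of_lt (div_pos h5 (by positivity))
    linarith [hsdef]
  have := hganti (mem_Ici.mpr (le_refl 1)) (mem_Ici.mpr hs1) hs1
  have hcalc : β * m * s = β * m + f2 1 := by
    rw [hsdef]
    field_simp
  have hf2s : f2 s ≤ 0 := by
    simp only [hgdef] at this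
    linarith
  exact absurd (hcon' s (by linarith)) (not_lt.mpr hf2s)

private lemma stepB_lemma (c : ℝ) (hc : 0 < c) (f2 : ℝ → ℝ) (hdf2 : Differentiable ℝ f2)
    (h0'' : f2 0 = c) (hA : ∃ t, 0 ≤ t ∧ f2 t ≤ 0) :
    ∃ t₀, 0 < t₀ ∧ f2 t₀ = 0 ∧ ∀ t ∈ Ico (0:ℝ) t₀, 0 < f2 t := by
  set A := {t : ℝ | 0 ≤ t ∧ f2 t ≤ 0} with hAdef
  have hclosed : IsClosed A :=
    (isClosed_le continuous_const continuous_id).inter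
      (isClosed_le hdf2.continuous continuous_const)
  obtain ⟨t, ht1, ht2⟩ := hA
  have hne : A.Nonempty := ⟨t, ht1, ht2⟩
  have hbdd : BddBelow A := ⟨0, fun x hx => hx.1⟩
  set t₀ := sInf A with ht₀def
  have hmem : t₀ ∈ A := hclosed.csInf_mem hne hbdd
  have hpos : ∀ s ∈ Ico (0:ℝ) t₀, 0 < f2 s := by
    intro s hs
    by_contra h
    exact absurd (csInf_le hbdd ⟨hs.1, not_lt.mp h⟩) (not_le.mpr hs.2)
  have ht₀pos : 0 < t₀ := by
    rcases eq_or_lt_of_le hmem.1 with h | h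
    · exfalso; have := hmem.2; rw [← h, h0''] at this; linarith
    · exact h
  refine ⟨t₀, ht₀pos, ?_, hpos⟩
  refine le_antisymm hmem.2 ?_
  have hcont : Tendsto f2 (𝓝[<] t₀) (𝓝 (f2 t₀)) :=
    (hdf2.continuous.continuousAt).continuousWithinAt.tendsto
  refine ge_of_tendsto hcont ?_
  filter_upwards [Ico_mem_nhdsLT_of_mem ⟨ht₀pos, le_refl t₀⟩] with s hs
  exact le_of_lt (hpos s hs)

private lemma stepC_lemma (β a b c : ℝ) (hβ1 : 0 < β) (hβ2 : β ≤ 1) (ha : 0 ≤ a)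
    (hb : 1 ≤ b) (hc : 0 < c) (f f1 f2 : ℝ → ℝ)
    (hdf : Differentiable ℝ f) (hdf1 : Differentiable ℝ f1) (hdf2 : Differentiable ℝ f2)
    (hf1def : f1 = deriv f) (hf2def : f2 = deriv f1)
    (heq' : ∀ t, 0 ≤ t → deriv f2 t = -(f t * f2 t) - β * (f1 t * (f1 t - 1)))
    (h0 : f 0 = a) (h0' : f1 0 = b) (h0'' : f2 0 = c)
    (t₀ : ℝ) (ht₀ : 0 < t₀) (h2z : f2 t₀ = 0) (h2pos : ∀ t ∈ Ico (0:ℝ) t₀, 0 < f2 t) :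
    ∀ t, 0 < t → 1 < f1 t := by
  have hmono : StrictMonoOn f1 (Icc 0 t₀) := by
    refine strictMonoOn_of_deriv_pos (convex_Icc 0 t₀) hdf1.continuous.continuousOn ?_
    intro x hx
    rw [interior_Icc] at hx
    rw [← hf2def]
    exact h2pos x ⟨le_of_lt hx.1, hx.2⟩
  have hgt : ∀ t, 0 < t → t ≤ t₀ → 1 < f1 t := by
    intro t h1 h2
    have := hmono (left_mem_Icc.mpr (le_of_lt ht₀)) ⟨le_of_lt h1, h2⟩ h1
    rw [h0'] at this
    linarith
  by_contra hcon
  push_neg at hcon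
  obtain ⟨s, hspos, hs1⟩ := hcon
  have hst₀ : t₀ < s := by
    by_contra h
    exact absurd (hgt s hspos (not_lt.mp h)) (not_lt.mpr hs1)
  set A := {t : ℝ | t ∈ Icc t₀ s ∧ f1 t ≤ 1} with hAdef
  have hclosed : IsClosed A :=
    isClosed_Icc.inter (isClosed_le hdf1.continuous continuous_const)
  have hne : A.Nonempty := ⟨s, ⟨le_of_lt hst₀, le_refl s⟩, hs1⟩
  have hbdd : BddBelow A := ⟨t₀, fun x hx => hx.1.1⟩
  set u := sInf A with hudef
  have hmem : u ∈ A := hclosed.csInf_mem hne hbdd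
  have hut₀ : t₀ < u := by
    rcases eq_or_lt_of_le hmem.1.1 with h | h
    · exact absurd (hgt u (by linarith [h ▸ ht₀]) (le_of_eq h.symm)) (not_lt.mpr hmem.2)
    · exact h
  have hupos : 0 < u := lt_trans ht₀ hut₀
  have hf1gt : ∀ t, 0 < t → t < u → 1 < f1 t := by
    intro t h1 h2
    rcases le_or_gt t t₀ with h | h
    · exact hgt t h1 h
    · by_contra h3
      exact absurd (csInf_le hbdd ⟨⟨le_of_lt h, by linarith [hmem.1.2]⟩, not_lt.mp h3⟩)
        (not_le.mpr h2)
  have hu1 : f1 u = 1 := by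
    refine le_antisymm hmem.2 ?_
    have hcont : Tendsto f1 (𝓝[<] u) (𝓝 (f1 u)) :=
      (hdf1.continuous.continuousAt).continuousWithinAt.tendsto
    refine ge_of_tendsto hcont ?_
    filter_upwards [Ico_mem_nhdsLT_of_mem ⟨hupos, le_refl u⟩] with t ht
    rcases eq_or_lt_of_le ht.1 with h | h
    · rw [← h, h0']; exact hb
    · exact le_of_lt (hf1gt t h ht.2)
  -- the auxiliary function L
  set L := fun t => f2 t + f t * (f1 t - 1) with hLdef
  have hLd : ∀ t, HasDerivAt L (deriv f2 t + (f1 t * (f1 t - 1) + f t * f2 t)) t := by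
    intro t
    have h0d : HasDerivAt f (f1 t) t := by rw [hf1def]; exact (hdf t).hasDerivAt
    have h1 : HasDerivAt f1 (f2 t) t := by rw [hf2def]; exact (hdf1 t).hasDerivAt
    exact (hdf2 t).hasDerivAt.add (h0d.mul (h1.sub_const 1))
  have hLmono : MonotoneOn L (Icc 0 u) := by
    refine monotoneOn_of_deriv_nonneg (convex_Icc 0 u)
      (Continuous.continuousOn ((hdf2.continuous).add (hdf.continuous.mul (hdf1.continuous.sub continuous_const)))) ?_ ?_
    · intro x _
      exact ((hLd x).differentiableAt).differentiableWithinAt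
    · intro x hx
      rw [interior_Icc] at hx
      rw [(hLd x).deriv, heq' x (le_of_lt hx.1)]
      have h1 : 1 ≤ f1 x := le_of_lt (hf1gt x hx.1 hx.2)
      have h2 : 0 ≤ f1 x * (f1 x - 1) := by nlinarith
      nlinarith [mul_nonneg (by linarith : (0:ℝ) ≤ 1 - β) h2]
  have hL0 : L 0 = c + a * (b - 1) := by simp [hLdef, h0, h0', h0'']
  have hLu : 0 < L u := by
    have := hLmono (left_mem_Icc.mpr (le_of_lt hupos)) ⟨le_of_lt hupos, le_refl u⟩ (le_of_lt hupos)
    rw [hL0] at this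
    nlinarith
  have hf2u : 0 < f2 u := by
    have : L u = f2 u := by simp [hLdef, hu1]
    linarith [this ▸ hLu]
  -- but the left-derivative of f1 at u is ≤ 0
  set g := fun t => 1 - f1 t with hgdef
  have hgd : HasDerivAt g (-f2 u) u := by
    have h1 : HasDerivAt f1 (f2 u) u := by rw [hf2def]; exact (hdf1 u).hasDerivAt
    exact h1.const_sub 1
  have h1 : 0 ≤ deriv g u := by
    refine deriv_nonneg_left hgd.differentiableAt (by simp [hgdef, hu1]) ?_
    filter_upwards [Ico_mem_nhdsLT_of_mem ⟨hupos, le_refl u⟩] with t ht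
    simp only [hgdef, sub_nonpos]
    rcases eq_or_lt_of_le ht.1 with h | h
    · rw [← h, h0']; exact hb
    · exact le_of_lt (hf1gt t h ht.2)
  rw [hgd.deriv] at h1
  linarith

private lemma stepD_lemma (β : ℝ) (hβ1 : 0 < β) (f f1 f2 : ℝ → ℝ)
    (hdf2 : Differentiable ℝ f2)
    (heq' : ∀ t, 0 ≤ t → deriv f2 t = -(f t * f2 t) - β * (f1 t * (f1 t - 1)))
    (t₀ : ℝ) (ht₀ : 0 < t₀) (h2z : f2 t₀ = 0)
    (hC : ∀ t, 0 < t → 1 < f1 t) :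
    ∀ t ∈ Ioi t₀, f2 t < 0 := by
  have hz : ∀ t, t₀ ≤ t → f2 t = 0 → deriv f2 t < 0 := by
    intro t ht hzero
    rw [heq' t (by linarith), hzero]
    have h1 : 1 < f1 t := hC t (by linarith)
    have h2 : 0 < f1 t * (f1 t - 1) := by nlinarith
    nlinarith [mul_pos hβ1 h2]
  have hle : ∀ s, t₀ ≤ s → f2 s ≤ 0 := by
    intro s hs
    exact stay_nonpos hdf2 h2z.le (fun t ht h => hz t ht.1 h) s ⟨hs, le_refl s⟩
  intro s hs
  rcases lt_or_eq_of_le (hle s (le_of_lt hs)) with h | h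
  · exact h
  · exfalso
    have hmax : IsLocalMax f2 s := by
      filter_upwards [isOpen_Ioi.mem_nhds hs] with t ht
      rw [h]
      exact hle t (le_of_lt ht)
    have := hmax.deriv_eq_zero
    have h2 := hz s (le_of_lt hs) h
    linarith

set_option maxHeartbeats 800000 in
private lemma stepE_lemma (β a : ℝ) (hβ1 : 0 < β) (hβ2 : β ≤ 1) (ha : 0 ≤ a)
    (f f1 f2 : ℝ → ℝ)
    (hdf : Differentiable ℝ f) (hdf1 : Differentiable ℝ f1) (hdf2 : Differentiable ℝ f2)
    (hf1def : f1 = deriv f) (hf2def : f2 = deriv f1)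
    (heq' : ∀ t, 0 ≤ t → deriv f2 t = -(f t * f2 t) - β * (f1 t * (f1 t - 1)))
    (key_ineq : ∀ x y : ℝ, 1 ≤ y → y ≤ x → y * (y - 1) ≤ x * (x - 1))
    (h0 : f 0 = a)
    (hC' : ∀ t, 0 ≤ t → 1 ≤ f1 t)
    (t₀ : ℝ) (ht₀ : 0 < t₀) (hD : ∀ t ∈ Ioi t₀, f2 t < 0) :
    Tendsto f1 atTop (𝓝 1) := by
  have hf1anti : AntitoneOn f1 (Ici t₀) := by
    refine anti_of_deriv hdf1 ?_
    intro t ht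
    rw [← hf2def]
    exact (hD t ht).le
  have hbddimg : BddBelow (f1 '' Ici t₀) := by
    refine ⟨1, ?_⟩
    rintro y ⟨t, ht, rfl⟩
    exact hC' t (by linarith [mem_Ici.mp ht])
  have himg : (f1 '' Ici t₀).Nonempty := ⟨f1 t₀, mem_image_of_mem _ self_mem_Ici⟩
  obtain ⟨ℓ, hℓdef⟩ : ∃ x, x = sInf (f1 '' Ici t₀) := ⟨_, rfl⟩
  have hℓ1 : 1 ≤ ℓ := by
    rw [hℓdef]
    refine le_csInf himg ?_
    rintro y ⟨t, ht, rfl⟩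
    exact hC' t (by linarith [mem_Ici.mp ht])
  have hℓle : ∀ t, t₀ ≤ t → ℓ ≤ f1 t := fun t ht =>
    hℓdef ▸ csInf_le hbddimg (mem_image_of_mem _ ht)
  have htend : Tendsto f1 atTop (𝓝 ℓ) := by
    rw [Metric.tendsto_atTop]
    intro ε hε
    obtain ⟨y, ⟨T, hT, rfl⟩, hy⟩ : ∃ y ∈ f1 '' Ici t₀, y < ℓ + ε := by
      rw [hℓdef] at hℓ1 ⊢
      exact exists_lt_of_csInf_lt himg (by linarith)
    refine ⟨T, fun t ht => ?_⟩
    have h1 : f1 t ≤ f1 T := hf1anti hT (mem_Ici.mpr (le_trans (mem_Ici.mp hT) ht)) ht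
    have h2 : ℓ ≤ f1 t := hℓle t (le_trans (mem_Ici.mp hT) ht)
    rw [Real.dist_eq, abs_lt]
    constructor <;> linarith
  suffices hℓeq : ℓ = 1 by rwa [hℓeq] at htend
  by_contra hne
  have hℓgt : 1 < ℓ := lt_of_le_of_ne hℓ1 (Ne.symm hne)
  obtain ⟨m, hmdef⟩ : ∃ x, x = ℓ * (ℓ - 1) := ⟨_, rfl⟩
  have hm : 0 < m := by rw [hmdef]; nlinarith
  have hβm : 0 < β * m := mul_pos hβ1 hm
  have hf1m : ∀ t, t₀ ≤ t → m ≤ f1 t * (f1 t - 1) := fun t ht =>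
    hmdef ▸ key_ineq _ _ hℓ1 (hℓle t ht)
  obtain ⟨B, hBdef⟩ : ∃ x, x = f1 t₀ := ⟨_, rfl⟩
  have hB1 : 1 ≤ B := hBdef ▸ hC' t₀ (le_of_lt ht₀)
  have hBpos : 0 < B := by linarith
  have hf1B : ∀ t, t₀ ≤ t → f1 t ≤ B := fun t ht => hBdef ▸ hf1anti self_mem_Ici ht ht
  -- growth bounds on f
  have hflow : ∀ t, 0 ≤ t → t + a ≤ f t := by
    intro t ht
    have hmono : MonotoneOn (fun s => f s - s) (Ici (0:ℝ)) := by
      refine mono_of_deriv (hdf.sub differentiable_id) ?_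
      intro s hs
      have hder : HasDerivAt (fun s => f s - s) (f1 s - 1) s := by
        have h1 : HasDerivAt f (f1 s) s := by rw [hf1def]; exact (hdf s).hasDerivAt
        exact h1.sub (hasDerivAt_id s)
      rw [hder.deriv]
      linarith [hC' s (le_of_lt hs)]
    have := hmono (self_mem_Ici) (mem_Ici.mpr ht) ht
    simp only [h0] at this
    linarith
  have hanti2 : AntitoneOn (fun s => f s - B * s) (Ici t₀) := by
    refine anti_of_deriv (hdf.sub (differentiable_id.const_mul B)) ?_
    intro s hs
    have hder : HasDerivAt (fun s => f s - B * s) (f1 s - B * 1) s := by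
      have h1 : HasDerivAt f (f1 s) s := by rw [hf1def]; exact (hdf s).hasDerivAt
      exact h1.sub ((hasDerivAt_id s).const_mul B)
    rw [hder.deriv]
    have := hf1B s (le_of_lt hs)
    linarith
  -- Claim 1 : somewhere 2 f f2 ≤ -βm
  obtain ⟨T, hTge, hTbar⟩ : ∃ T, t₀ + 1 ≤ T ∧ 2 * f T * f2 T ≤ -(β * m) := by
    by_contra hcon
    push_neg at hcon
    have hstep : ∀ t, t₀ + 1 ≤ t → deriv f2 t ≤ -(β * m / 2) := by
      intro t ht
      have ht0 : (0:ℝ) ≤ t := by linarith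
      have h1 := hcon t ht
      have h2 := hf1m t (by linarith)
      rw [heq' t ht0]
      nlinarith [mul_le_mul_of_nonneg_left h2 hβ1.le]
    have hanti : AntitoneOn (fun t => f2 t + β * m / 2 * t) (Ici (t₀ + 1)) := by
      refine anti_of_deriv (hdf2.add (differentiable_id.const_mul _)) ?_
      intro t ht
      have hder : HasDerivAt (fun t => f2 t + β * m / 2 * t) (deriv f2 t + β * m / 2 * 1) t :=
        (hdf2 t).hasDerivAt.add ((hasDerivAt_id t).const_mul _)
      rw [hder.deriv]
      have := hstep t (le_of_lt ht)
      linarith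
    have hval := hanti self_mem_Ici (mem_Ici.mpr (by linarith : t₀ + 1 ≤ t₀ + 2)) (by linarith)
    simp only at hval
    have hA1 : f2 (t₀ + 1) < 0 := hD _ (mem_Ioi.mpr (by linarith))
    have hA2 : f2 (t₀ + 2) ≤ f2 (t₀ + 1) - β * m / 2 := by linarith
    have hf1' : 1 ≤ f (t₀ + 2) := by have := hflow (t₀ + 2) (by linarith); linarith
    have hA3 := hcon (t₀ + 2) (by linarith)
    have hA4 : f2 (t₀ + 2) < 0 := hD _ (mem_Ioi.mpr (by linarith))
    nlinarith
  have hTpos : 0 < T := by linarith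
  -- Claim 2 : barrier invariance
  have hbar : ∀ t, T ≤ t → 2 * f t * f2 t ≤ -(β * m) := by
    intro s hs
    have hhd : ∀ t, HasDerivAt (fun t => 2 * f t * f2 t + β * m)
        (2 * f1 t * f2 t + 2 * f t * deriv f2 t) t := by
      intro t
      have h1 : HasDerivAt f (f1 t) t := by rw [hf1def]; exact (hdf t).hasDerivAt
      have h2 : HasDerivAt (fun y => 2 * f y) (2 * f1 t) t := h1.const_mul 2
      have h3 := (h2.mul (hdf2 t).hasDerivAt).add_const (β * m)
      exact h3
    have hdiff : Differentiable ℝ (fun t => 2 * f t * f2 t + β * m) :=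
      fun t => (hhd t).differentiableAt
    have hz : ∀ t ∈ Icc T s, (fun t => 2 * f t * f2 t + β * m) t = 0 →
        deriv (fun t => 2 * f t * f2 t + β * m) t < 0 := by
      intro t htmem hzero
      simp only at hzero
      have ht1 : t₀ + 1 ≤ t := le_trans hTge htmem.1
      have ht0 : (0:ℝ) ≤ t := by linarith
      have hft : 1 ≤ f t := by have := hflow t ht0; linarith
      have hf2neg : f2 t < 0 := hD t (mem_Ioi.mpr (by linarith))
      have hf1pos : 1 ≤ f1 t := hC' t ht0
      have hprod : f t * f2 t = -(β * m) / 2 := by linarith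
      have hd3 : deriv f2 t ≤ -(β * m / 2) := by
        rw [heq' t ht0, hprod]
        have h2 := hf1m t (by linarith)
        nlinarith [mul_le_mul_of_nonneg_left h2 hβ1.le]
      rw [(hhd t).deriv]
      have h10 : 2 * f1 t * f2 t < 0 := by nlinarith
      have h11 : f t * deriv f2 t ≤ f t * (-(β * m / 2)) :=
        mul_le_mul_of_nonneg_left hd3 (by linarith)
      have h12 : f t * (-(β * m / 2)) ≤ -(β * m / 2) := by nlinarith
      linarith
    have h20 := stay_nonpos hdiff (show 2 * f T * f2 T + β * m ≤ 0 by linarith) hz s ⟨hs, le_refl s⟩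
    linarith [h20]
  -- Claim 3 : logarithmic decay of f1
  obtain ⟨C, hCdef⟩ : ∃ x, x = f T - B * T := ⟨_, rfl⟩
  obtain ⟨k, hkdef⟩ : ∃ x, x = β * m / (2 * B) := ⟨_, rfl⟩
  have hkpos : 0 < k := by rw [hkdef]; exact div_pos hβm (by linarith)
  have hfTpos : 0 < f T := by have := hflow T (by linarith); linarith
  have hDpos : ∀ t, T ≤ t → 0 < C + B * t := by
    intro t ht
    have h1 : C + B * t = f T + B * (t - T) := by rw [hCdef]; ring
    rw [h1]
    nlinarith [mul_nonneg hBpos.le (sub_nonneg.mpr ht)]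
  have hfleD : ∀ t, T ≤ t → f t ≤ C + B * t := by
    intro t ht
    have h3 := hanti2 (mem_Ici.mpr (by linarith : t₀ ≤ T)) (mem_Ici.mpr (by linarith : t₀ ≤ t)) ht
    simp only at h3
    rw [hCdef]
    linarith
  have hgd : ∀ t, T ≤ t → HasDerivAt (fun t => f1 t + k * Real.log (C + B * t))
      (f2 t + k * ((C + B * t)⁻¹ * B)) t := by
    intro t ht
    have h1 : HasDerivAt f1 (f2 t) t := by rw [hf2def]; exact (hdf1 t).hasDerivAt
    have h2 : HasDerivAt (fun y => C + B * y) (B * 1) t :=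
      ((hasDerivAt_id t).const_mul B).const_add C
    have h3 := (Real.hasDerivAt_log (ne_of_gt (hDpos t ht))).comp t h2
    have h4 := h3.const_mul k
    have h5 := h1.add h4
    rw [mul_one] at h5
    exact h5
  have hganti : AntitoneOn (fun t => f1 t + k * Real.log (C + B * t)) (Ici T) := by
    refine antitoneOn_of_deriv_nonpos (convex_Ici T) ?_ ?_ ?_
    · intro t ht
      exact ((hgd t (mem_Ici.mp ht)).continuousAt).continuousWithinAt
    · intro t ht
      rw [interior_Ici] at ht
      exact ((hgd t (le_of_lt (mem_Ioi.mp ht))).differentiableAt).differentiableWithinAt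
    · intro t ht
      rw [interior_Ici] at ht
      have ht' : T ≤ t := le_of_lt (mem_Ioi.mp ht)
      rw [(hgd t ht').deriv]
      have hDp : 0 < C + B * t := hDpos t ht'
      have hfD : f t ≤ C + B * t := hfleD t ht'
      have hf2neg : f2 t < 0 := hD t (mem_Ioi.mpr (by linarith))
      have h2ff2 := hbar t ht'
      have hDf2 : 2 * (C + B * t) * f2 t ≤ -(β * m) := by nlinarith
      have hkB : k * ((C + B * t)⁻¹ * B) = β * m / 2 / (C + B * t) := by
        rw [hkdef]
        field_simp
      rw [hkB]
      have h13 : β * m / 2 / (C + B * t) ≤ -f2 t := by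
        rw [div_le_iff₀ hDp]
        nlinarith
      linarith
  -- conclude
  have hψ : Tendsto (fun s => (f1 T + k * Real.log (C + B * T)) - k * Real.log (C + B * s))
      atTop atBot := by
    have h1 : Tendsto (fun s : ℝ => C + B * s) atTop atTop :=
      tendsto_atTop_add_const_left _ C (Tendsto.const_mul_atTop hBpos tendsto_id)
    have h2 : Tendsto (fun s : ℝ => Real.log (C + B * s)) atTop atTop :=
      Real.tendsto_log_atTop.comp h1
    have h3 : Tendsto (fun s : ℝ => k * Real.log (C + B * s)) atTop atTop :=
      Tendsto.const_mul_atTop hkpos h2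
    have h4 : Tendsto (fun s : ℝ => -(k * Real.log (C + B * s))) atTop atBot :=
      tendsto_neg_atTop_atBot.comp h3
    have h5 := tendsto_atBot_add_const_left _ (f1 T + k * Real.log (C + B * T)) h4
    convert h5 using 2 with s
    ring
  have hev1 : ∀ᶠ s in atTop,
      (f1 T + k * Real.log (C + B * T)) - k * Real.log (C + B * s) < 1 :=
    hψ.eventually (eventually_lt_atBot 1)
  have hev2 : ∀ᶠ s in atTop, T ≤ s := eventually_ge_atTop T
  obtain ⟨s, hs1, hs2⟩ := (hev1.and hev2).exists
  have h6 := hganti self_mem_Ici (mem_Ici.mpr hs2) hs2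
  simp only at h6
  have h7 : 1 ≤ f1 s := hC' s (by linarith)
  linarith


/-- for `β ∈ (0,1]`, `a ≥ 0`, `b ≥ 1`, `c > 0`, a solution of
`f''' + f f'' + β f'(f'-1) = 0` on `[0,∞)` with `f(0) = a`, `f'(0) = b`,
`f''(0) = c` is convex-concave: there is `t₀ > 0` with `f'' > 0` on `[0,t₀)`,
`f''(t₀) = 0`, `f'' < 0` on `(t₀,∞)`, and `f' → 1` at `+∞`. -/
theorem stmt12 (β a b c : ℝ) (hβ1 : 0 < β) (hβ2 : β ≤ 1) (ha : 0 ≤ a)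
    (hb : 1 ≤ b) (hc : 0 < c)
    (f : ℝ → ℝ) (hf : ContDiff ℝ 3 f)
    (heq : ∀ t ∈ Ici (0 : ℝ), deriv (deriv (deriv f)) t + f t * deriv (deriv f) t
      + β * deriv f t * (deriv f t - 1) = 0)
    (h0 : f 0 = a) (h0' : deriv f 0 = b) (h0'' : deriv (deriv f) 0 = c) :
    ∃ t₀ > 0, (∀ t ∈ Ico 0 t₀, 0 < deriv (deriv f) t) ∧
      deriv (deriv f) t₀ = 0 ∧
      (∀ t ∈ Ioi t₀, deriv (deriv f) t < 0) ∧
      Tendsto (deriv f) atTop (𝓝 1) := by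
  obtain ⟨hdf, hdf1, hdf2⟩ :
      Differentiable ℝ f ∧ Differentiable ℝ (deriv f) ∧ Differentiable ℝ (deriv (deriv f)) := by
    have h3 : ContDiff ℝ ((2:ℕ∞)+1) f := by exact_mod_cast hf
    rw [contDiff_succ_iff_deriv] at h3
    have h2 : ContDiff ℝ ((1:ℕ∞)+1) (deriv f) := h3.2.2
    rw [contDiff_succ_iff_deriv] at h2
    have h1 : ContDiff ℝ ((0:ℕ∞)+1) (deriv (deriv f)) := h2.2.2
    rw [contDiff_succ_iff_deriv] at h1
    exact ⟨h3.1, h2.1, h1.1⟩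
  have heq' : ∀ t, 0 ≤ t → deriv (deriv (deriv f)) t
      = -(f t * deriv (deriv f) t) - β * (deriv f t * (deriv f t - 1)) := by
    intro t ht
    have h := heq t ht
    linear_combination h
  have key_ineq : ∀ x y : ℝ, 1 ≤ y → y ≤ x → y * (y - 1) ≤ x * (x - 1) := by
    intro x y h1 h2; nlinarith
  have hA := stepA_lemma β a b c hβ1 hβ2 ha hb hc f (deriv f) (deriv (deriv f))
    hdf hdf1 hdf2 rfl rfl heq' key_ineq h0 h0' h0''
  obtain ⟨t₀, ht₀, h2z, h2pos⟩ := stepB_lemma c hc (deriv (deriv f)) hdf2 h0'' hA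
  have hC := stepC_lemma β a b c hβ1 hβ2 ha hb hc f (deriv f) (deriv (deriv f))
    hdf hdf1 hdf2 rfl rfl heq' h0 h0' h0'' t₀ ht₀ h2z h2pos
  have hC' : ∀ t, 0 ≤ t → 1 ≤ deriv f t := by
    intro t ht
    rcases eq_or_lt_of_le ht with h | h
    · rw [← h, h0']; exact hb
    · exact le_of_lt (hC t h)
  have hD := stepD_lemma β hβ1 f (deriv f) (deriv (deriv f)) hdf2 heq' t₀ ht₀ h2z hC
  have hE := stepE_lemma β a hβ1 hβ2 ha f (deriv f) (deriv (deriv f))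
    hdf hdf1 hdf2 rfl rfl heq' key_ineq h0 hC' t₀ ht₀ hD
  exact ⟨t₀, ht₀, h2pos, h2z, hD, hE⟩
end

section
/- Let β ∈ (0,1], a ≥ 0 and b ≥ 1, and let f be a solution of the equation f''' + f·f'' + β·f'·(f'−1) = 0 on [0, T) (with T ≤ +∞) with f(0) = a, f'(0) = b and f''(0) = c, where either c < 0, or c = 0 and b > 1. If there exists s ∈ (0, T) such that f' > 0 on [0, s) and f'(s) = 0, then f(t) ≤ √(a² + 2b) for all t ∈ [0, T). -/
set_option maxHeartbeats 1000000


open Set Filter Topology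

/-- for `β ∈ (0,1]`, `a ≥ 0`, `b ≥ 1`, a solution of
`f''' + f f'' + β f'(f'-1) = 0` on `[0,T)` (`T ≤ +∞`, modelled with `T : EReal`)
with `f(0) = a`, `f'(0) = b`, `f''(0) = c`, where `c < 0` or (`c = 0` and `b > 1`):
if `f' > 0` on `[0,s)` and `f'(s) = 0` for some `s ∈ (0,T)`, then
`f(t) ≤ √(a² + 2b)` on `[0,T)`. -/
theorem stmt13 (β a b c : ℝ) (hβ1 : 0 < β) (hβ2 : β ≤ 1) (ha : 0 ≤ a) (hb : 1 ≤ b)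
    (T : EReal) (f : ℝ → ℝ) (hf : ContDiff ℝ 3 f)
    (heq : ∀ t : ℝ, 0 ≤ t → (t : EReal) < T →
      deriv (deriv (deriv f)) t + f t * deriv (deriv f) t
        + β * deriv f t * (deriv f t - 1) = 0)
    (h0 : f 0 = a) (h0' : deriv f 0 = b) (h0'' : deriv (deriv f) 0 = c)
    (hc : c < 0 ∨ (c = 0 ∧ 1 < b))
    (hs : ∃ s : ℝ, 0 < s ∧ (s : EReal) < T ∧
      (∀ t : ℝ, 0 ≤ t → t < s → 0 < deriv f t) ∧ deriv f s = 0) :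
    ∀ t : ℝ, 0 ≤ t → (t : EReal) < T → f t ≤ Real.sqrt (a ^ 2 + 2 * b) := by
  obtain ⟨s, hs0, hsT, hspos, hszero⟩ := hs
  set u : ℝ → ℝ := deriv f with hu_def
  set v : ℝ → ℝ := deriv u with hv_def
  -- smoothness facts
  have hdf : Differentiable ℝ f := hf.differentiable (by norm_num)
  have hu2 : ContDiff ℝ 2 u := ((contDiff_succ_iff_deriv (n := 2)).1 (by exact_mod_cast hf)).2.2
  have hdu : Differentiable ℝ u := hu2.differentiable (by norm_num)
  have hv1 : ContDiff ℝ 1 v := ((contDiff_succ_iff_deriv (n := 1)).1 (by exact_mod_cast hu2)).2.2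
  have hdv : Differentiable ℝ v := hv1.differentiable (by norm_num)
  have hcw : Continuous (deriv v) :=
    ((contDiff_succ_iff_deriv (n := 0)).1 (by exact_mod_cast hv1)).2.2.continuous
  have hcf : Continuous f := hdf.continuous
  have hcu : Continuous u := hdu.continuous
  have hcv : Continuous v := hdv.continuous
  -- ODE in terms of u, v
  have hode : ∀ t : ℝ, 0 ≤ t → (t : EReal) < T →
      deriv v t = -(f t * v t) - β * u t * (u t - 1) := by
    intro t ht hT
    have := heq t ht hT
    linarith [this]
  -- L1 : no common zero of u and v on [0, T)
  have hno : ∀ τ : ℝ, 0 ≤ τ → (τ : EReal) < T → u τ = 0 → v τ = 0 → False := by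
    intro τ hτ0 hτT huτ hvτ
    obtain ⟨C₁, hC₁⟩ := (isCompact_Icc (a := 0) (b := τ)).exists_bound_of_continuousOn
      hcf.continuousOn
    obtain ⟨C₂, hC₂⟩ := (isCompact_Icc (a := 0) (b := τ)).exists_bound_of_continuousOn
      hcu.continuousOn
    set C : ℝ := max C₁ C₂ with hC_def
    have hCf : ∀ t ∈ Icc (0:ℝ) τ, |f t| ≤ C := fun t ht => le_trans (hC₁ t ht) (le_max_left _ _)
    have hCu : ∀ t ∈ Icc (0:ℝ) τ, |u t| ≤ C := fun t ht => le_trans (hC₂ t ht) (le_max_right _ _)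
    have hC0 : 0 ≤ C := le_trans (abs_nonneg _) (hCf 0 ⟨le_refl _, hτ0⟩)
    set L : ℝ := 3 * C + 2 with hL_def
    set w : ℝ → ℝ := fun t => u t ^ 2 + v t ^ 2 with hw_def
    set h : ℝ → ℝ := fun t => w t * Real.exp (L * t) with hh_def
    have hwD : ∀ t : ℝ, HasDerivAt w (2 * u t * v t + 2 * v t * deriv v t) t := by
      intro t
      have h1 : HasDerivAt (fun t => u t ^ 2) (2 * u t * v t) t := by
        have := ((hdu t).hasDerivAt).fun_pow 2
        simpa [mul_comm, mul_assoc] using this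
      have h2 : HasDerivAt (fun t => v t ^ 2) (2 * v t * deriv v t) t := by
        have := ((hdv t).hasDerivAt).fun_pow 2
        simpa [mul_comm, mul_assoc] using this
      simpa using h1.fun_add h2
    have hhD : ∀ t : ℝ, HasDerivAt h
        ((2 * u t * v t + 2 * v t * deriv v t) * Real.exp (L * t)
          + w t * (Real.exp (L * t) * L)) t := by
      intro t
      have hexp : HasDerivAt (fun t => Real.exp (L * t)) (Real.exp (L * t) * L) t := by
        have : HasDerivAt (fun t : ℝ => L * t) L t := by
          simpa using (hasDerivAt_id t).const_mul L
        exact this.exp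
      exact (hwD t).mul hexp
    have hmono : MonotoneOn h (Icc 0 τ) := by
      apply monotoneOn_of_deriv_nonneg (convex_Icc _ _)
      · exact Continuous.continuousOn
          (((hcu.pow 2).add (hcv.pow 2)).mul ((continuous_const.mul continuous_id).rexp))
      · intro x hx
        exact ((hhD x).differentiableAt).differentiableWithinAt
      · intro x hx
        rw [interior_Icc] at hx
        rw [(hhD x).deriv]
        have hx0 : (0:ℝ) ≤ x := le_of_lt hx.1
        have hxT : (x : EReal) < T :=
          lt_of_le_of_lt (EReal.coe_le_coe_iff.2 (le_of_lt hx.2)) hτT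
        rw [hode x hx0 hxT]
        have hfb := hCf x ⟨hx0, le_of_lt hx.2⟩
        have hub := hCu x ⟨hx0, le_of_lt hx.2⟩
        have hf1 : f x ≤ C := le_trans (le_abs_self _) hfb
        have hf2 : -C ≤ f x := neg_le_of_abs_le hfb
        have hu1 : u x ≤ C := le_trans (le_abs_self _) hub
        have hu2' : -C ≤ u x := neg_le_of_abs_le hub
        have hexp_pos : 0 < Real.exp (L * x) := Real.exp_pos _
        have key : 0 ≤ 2 * u x * v x + 2 * v x * (-(f x * v x) - β * u x * (u x - 1))
            + w x * L := by
          simp only [hw_def, hL_def]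
          set A := u x
          set V := v x
          set F := f x
          have hA : |A| ≤ C := abs_le.2 ⟨hu2', hu1⟩
          have q1 : |A| * |V| ≤ (A ^ 2 + V ^ 2) / 2 := by
            nlinarith [sq_nonneg (|A| - |V|), sq_abs A, sq_abs V]
          have q2 : A ^ 2 * |V| ≤ C * ((A ^ 2 + V ^ 2) / 2) := by
            have h1 : A ^ 2 * |V| = |A| * (|A| * |V|) := by
              rw [← sq_abs A]; ring
            rw [h1]
            exact mul_le_mul hA q1 (mul_nonneg (abs_nonneg _) (abs_nonneg _)) hC0
          have hh1 : 0 ≤ (1 - β) * (A ^ 2 * |V|) :=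
            mul_nonneg (by linarith) (mul_nonneg (sq_nonneg _) (abs_nonneg _))
          have hh2 : 0 ≤ β * (A ^ 2 * |V| - A ^ 2 * V) :=
            mul_nonneg (le_of_lt hβ1)
              (sub_nonneg.2 (mul_le_mul_of_nonneg_left (le_abs_self V) (sq_nonneg A)))
          have g3 : 2 * (β * (A ^ 2 * V)) ≤ C * (A ^ 2 + V ^ 2) := by linarith
          have hh3 : 0 ≤ β * (A * V + |A| * |V|) := by
            apply mul_nonneg (le_of_lt hβ1)
            rw [← abs_mul]
            linarith [neg_abs_le (A * V)]
          have hh4 : 0 ≤ (1 - β) * (|A| * |V|) :=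
            mul_nonneg (by linarith) (mul_nonneg (abs_nonneg _) (abs_nonneg _))
          have g4 : -(A ^ 2 + V ^ 2) ≤ 2 * (β * (A * V)) := by linarith
          have hh5 : 0 ≤ (C - F) * V ^ 2 := mul_nonneg (by linarith) (sq_nonneg _)
          have g1 : -(A ^ 2 + V ^ 2) ≤ 2 * A * V := by nlinarith [sq_nonneg (A + V)]
          have hCA : 0 ≤ C * A ^ 2 := mul_nonneg hC0 (sq_nonneg _)
          have hCV : 0 ≤ C * V ^ 2 := mul_nonneg hC0 (sq_nonneg _)
          linarith [g1, g3, g4, hh5, hCA, hCV]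
        calc (0:ℝ) ≤ (2 * u x * v x + 2 * v x * (-(f x * v x) - β * u x * (u x - 1))
              + w x * L) * Real.exp (L * x) := mul_nonneg key (le_of_lt hexp_pos)
          _ = (2 * u x * v x + 2 * v x * (-(f x * v x) - β * u x * (u x - 1)))
              * Real.exp (L * x) + w x * (Real.exp (L * x) * L) := by ring
    have h0τ : h 0 ≤ h τ := hmono ⟨le_refl _, hτ0⟩ ⟨hτ0, le_refl _⟩ hτ0
    have hhτ : h τ = 0 := by simp [hh_def, hw_def, huτ, hvτ]
    have hh0 : h 0 = b ^ 2 + c ^ 2 := by simp [hh_def, hw_def, h0', h0'']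
    rw [hhτ, hh0] at h0τ
    nlinarith [sq_nonneg c]
  -- v s ≤ 0
  have hvs : v s ≤ 0 := by
    have hder : Tendsto (slope u s) (𝓝[≠] s) (𝓝 (v s)) :=
      hasDerivAt_iff_tendsto_slope.1 (hdu s).hasDerivAt
    have hle : Tendsto (slope u s) (𝓝[<] s) (𝓝 (v s)) :=
      hder.mono_left (nhdsWithin_mono _ (fun x hx => ne_of_lt hx))
    refine le_of_tendsto hle ?_
    filter_upwards [Ioo_mem_nhdsLT_of_mem (⟨hs0, le_refl s⟩ : s ∈ Ioc (0:ℝ) s)] with t ht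
    have hut : 0 < u t := hspos t (le_of_lt ht.1) ht.2
    rw [slope_def_field, hszero]
    apply div_nonpos_of_nonneg_of_nonpos (by linarith)
    linarith [ht.2]
  -- Part A : bound on [0, s]
  set g : ℝ → ℝ := fun t => f t ^ 2 + 2 * u t with hg_def
  set G : ℝ → ℝ := fun t => 2 * (f t * u t) + 2 * v t with hG_def
  have hGD : ∀ t : ℝ, HasDerivAt g (G t) t := by
    intro t
    have h1 : HasDerivAt (fun t => f t ^ 2) (2 * f t * u t) t := by
      have := ((hdf t).hasDerivAt).fun_pow 2
      simpa [mul_comm, mul_assoc] using this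
    have h2 : HasDerivAt (fun t => 2 * u t) (2 * v t) t := by
      simpa using ((hdu t).hasDerivAt).const_mul 2
    have := h1.fun_add h2
    simp only [hG_def, hg_def]
    exact this.congr_deriv (by ring)
  have hG'D : ∀ t : ℝ, HasDerivAt G (2 * (u t * u t + f t * deriv v t * 0 + f t * v t)
      + 2 * deriv v t) t := by
    intro t
    have h1 : HasDerivAt (fun t => f t * u t) (u t * u t + f t * v t) t := by
      have := ((hdf t).hasDerivAt).fun_mul ((hdu t).hasDerivAt)
      simpa [mul_comm] using this
    have h2 : HasDerivAt (fun t => 2 * (f t * u t)) (2 * (u t * u t + f t * v t)) t :=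
      h1.const_mul 2
    have h3 : HasDerivAt (fun t => 2 * v t) (2 * deriv v t) t :=
      ((hdv t).hasDerivAt).const_mul 2
    have h4 := h2.fun_add h3
    simp only [hG_def]
    exact h4.congr_deriv (by ring)
  have hGmono : MonotoneOn G (Icc 0 s) := by
    apply monotoneOn_of_deriv_nonneg (convex_Icc _ _)
    · exact Continuous.continuousOn
        ((continuous_const.mul (hcf.mul hcu)).add (continuous_const.mul hcv))
    · intro x hx
      exact ((hG'D x).differentiableAt).differentiableWithinAt
    · intro x hx
      rw [interior_Icc] at hx
      rw [(hG'D x).deriv]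
      have hx0 : (0:ℝ) ≤ x := le_of_lt hx.1
      have hxT : (x : EReal) < T :=
        lt_of_le_of_lt (EReal.coe_le_coe_iff.2 (le_of_lt hx.2)) hsT
      rw [hode x hx0 hxT]
      have hux : 0 < u x := hspos x hx0 hx.2
      nlinarith [sq_nonneg (u x)]
  have hGs : G s = 2 * v s := by simp [hG_def, hszero]
  have hGle : ∀ t ∈ Icc (0:ℝ) s, G t ≤ 0 := by
    intro t ht
    have := hGmono ht ⟨le_trans ht.1 ht.2, le_refl s⟩ ht.2
    rw [hGs] at this
    linarith
  have hganti : AntitoneOn g (Icc 0 s) := by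
    apply antitoneOn_of_deriv_nonpos (convex_Icc _ _)
    · exact Continuous.continuousOn ((hcf.pow 2).add (continuous_const.mul hcu))
    · intro x hx
      exact ((hGD x).differentiableAt).differentiableWithinAt
    · intro x hx
      rw [interior_Icc] at hx
      rw [(hGD x).deriv]
      exact hGle x ⟨le_of_lt hx.1, le_of_lt hx.2⟩
  have hg0 : g 0 = a ^ 2 + 2 * b := by simp [hg_def, h0, h0']
  have hsqle : ∀ t ∈ Icc (0:ℝ) s, f t ^ 2 ≤ a ^ 2 + 2 * b := by
    intro t ht
    have hgt : g t ≤ a ^ 2 + 2 * b := by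
      rw [← hg0]
      exact hganti ⟨le_refl _, le_of_lt hs0⟩ ht ht.1
    have hut : 0 ≤ u t := by
      rcases lt_or_eq_of_le ht.2 with h | h
      · exact le_of_lt (hspos t ht.1 h)
      · rw [h, hszero]
    simp only [hg_def] at hgt
    linarith
  have hM : ∀ t ∈ Icc (0:ℝ) s, f t ≤ Real.sqrt (a ^ 2 + 2 * b) := by
    intro t ht
    calc f t ≤ |f t| := le_abs_self _
      _ = Real.sqrt (f t ^ 2) := (Real.sqrt_sq_eq_abs _).symm
      _ ≤ Real.sqrt (a ^ 2 + 2 * b) := Real.sqrt_le_sqrt (hsqle t ht)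
  -- Part B : u ≤ 0 and v ≤ 0 on [s, t'] for any t' < T
  have hB : ∀ tst : ℝ, s ≤ tst → (tst : EReal) < T → ∀ r ∈ Icc s tst, u r ≤ 0 ∧ v r ≤ 0 := by
    intro tst hst hstT
    set B : Set ℝ := {t | t ∈ Icc s tst ∧ ∀ r ∈ Icc s t, u r ≤ 0 ∧ v r ≤ 0} with hB_def
    have hsB : s ∈ B := by
      refine ⟨⟨le_refl _, hst⟩, ?_⟩
      intro r hr
      have : r = s := le_antisymm hr.2 hr.1
      rw [this, hszero]
      exact ⟨le_refl _, hvs⟩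
    have hBne : B.Nonempty := ⟨s, hsB⟩
    have hBbdd : BddAbove B := ⟨tst, fun t ht => ht.1.2⟩
    set τ : ℝ := sSup B with hτ_def
    have hsτ : s ≤ τ := le_csSup hBbdd hsB
    have hτt : τ ≤ tst := csSup_le hBne (fun t ht => ht.1.2)
    have hτT : (τ : EReal) < T := lt_of_le_of_lt (EReal.coe_le_coe_iff.2 hτt) hstT
    have hτ0 : (0:ℝ) ≤ τ := le_trans (le_of_lt hs0) hsτ
    have hbelow : ∀ r, s ≤ r → r < τ → u r ≤ 0 ∧ v r ≤ 0 := by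
      intro r hr1 hr2
      obtain ⟨t, htB, hrt⟩ := exists_lt_of_lt_csSup hBne hr2
      exact htB.2 r ⟨hr1, le_of_lt hrt⟩
    have hτuv : u τ ≤ 0 ∧ v τ ≤ 0 := by
      rcases eq_or_lt_of_le hsτ with h | h
      · rw [← h, hszero]; exact ⟨le_refl _, hvs⟩
      · constructor
        · refine le_of_tendsto
            (hcu.continuousAt.tendsto.mono_left nhdsWithin_le_nhds :
              Tendsto u (𝓝[<] τ) _) ?_
          filter_upwards [Ioo_mem_nhdsLT_of_mem (⟨h, le_refl τ⟩ : τ ∈ Ioc s τ)] with r hr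
          exact (hbelow r (le_of_lt hr.1) hr.2).1
        · refine le_of_tendsto
            (hcv.continuousAt.tendsto.mono_left nhdsWithin_le_nhds :
              Tendsto v (𝓝[<] τ) _) ?_
          filter_upwards [Ioo_mem_nhdsLT_of_mem (⟨h, le_refl τ⟩ : τ ∈ Ioc s τ)] with r hr
          exact (hbelow r (le_of_lt hr.1) hr.2).2
    have hτall : ∀ r ∈ Icc s τ, u r ≤ 0 ∧ v r ≤ 0 := by
      intro r hr
      rcases eq_or_lt_of_le hr.2 with h | h
      · rw [h]; exact hτuv
      · exact hbelow r hr.1 h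
    have hτeq : τ = tst := by
      by_contra hne
      have hτlt : τ < tst := lt_of_le_of_ne hτt hne
      have hext : ∃ t', τ < t' ∧ t' ∈ B := by
        have hveps : ∃ ε > (0:ℝ), ∀ x ∈ Icc τ (τ + ε), v x ≤ 0 := by
          rcases lt_or_eq_of_le hτuv.2 with hv_neg | hv_zero
          · have hev : ∀ᶠ x in 𝓝 τ, v x < 0 :=
              hcv.continuousAt.eventually_lt_const hv_neg
            obtain ⟨ε₀, hε₀, hball⟩ := Metric.eventually_nhds_iff.1 hev
            refine ⟨ε₀ / 2, by linarith, ?_⟩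
            intro x hx
            apply le_of_lt
            apply hball
            rw [Real.dist_eq, abs_lt]
            constructor
            · linarith [hx.1]
            · linarith [hx.2]
          · have huτ : u τ < 0 := by
              rcases lt_or_eq_of_le hτuv.1 with h | h
              · exact h
              · exact (hno τ hτ0 hτT h hv_zero).elim
            have hderiv_neg : deriv v τ < 0 := by
              rw [hode τ hτ0 hτT, hv_zero]
              have h1 : 0 < u τ * (u τ - 1) := mul_pos_of_neg_of_neg huτ (by linarith)
              nlinarith [mul_pos hβ1 h1]
            have hev : ∀ᶠ x in 𝓝 τ, deriv v x < 0 :=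
              hcw.continuousAt.eventually_lt_const hderiv_neg
            obtain ⟨ε₀, hε₀, hball⟩ := Metric.eventually_nhds_iff.1 hev
            refine ⟨ε₀ / 2, by linarith, ?_⟩
            have hanti : AntitoneOn v (Icc τ (τ + ε₀ / 2)) := by
              apply antitoneOn_of_deriv_nonpos (convex_Icc _ _) hcv.continuousOn
              · intro x hx
                exact (hdv x).differentiableWithinAt
              · intro x hx
                rw [interior_Icc] at hx
                apply le_of_lt
                apply hball
                rw [Real.dist_eq, abs_lt]
                constructor
                · linarith [hx.1]
                · linarith [hx.2]
            intro x hx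
            have := hanti ⟨le_refl _, by linarith⟩ hx hx.1
            rw [← hv_zero]
            exact this
        obtain ⟨ε, hε, hvneg⟩ := hveps
        set t' : ℝ := min (τ + ε) tst with ht'_def
        have ht'1 : τ < t' := lt_min (by linarith) hτlt
        have ht'2 : t' ≤ τ + ε := min_le_left _ _
        have ht'3 : t' ≤ tst := min_le_right _ _
        have huanti : AntitoneOn u (Icc τ t') := by
          apply antitoneOn_of_deriv_nonpos (convex_Icc _ _) hcu.continuousOn
          · intro x hx
            exact (hdu x).differentiableWithinAt
          · intro x hx
            rw [interior_Icc] at hx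
            exact hvneg x ⟨le_of_lt hx.1, by linarith [hx.2]⟩
        refine ⟨t', ht'1, ⟨⟨le_trans hsτ (le_of_lt ht'1), ht'3⟩, ?_⟩⟩
        intro r hr
        rcases le_or_gt r τ with h | h
        · exact hτall r ⟨hr.1, h⟩
        · constructor
          · have := huanti ⟨le_refl _, le_of_lt ht'1⟩ ⟨le_of_lt h, hr.2⟩ (le_of_lt h)
            exact le_trans this hτuv.1
          · exact hvneg r ⟨le_of_lt h, le_trans hr.2 ht'2⟩
      obtain ⟨t', ht'1, ht'2⟩ := hext
      have := le_csSup hBbdd ht'2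
      rw [← hτ_def] at this
      linarith
    rw [hτeq] at hτall
    exact hτall
  -- assemble
  intro t ht htT
  rcases le_or_gt t s with h | h
  · exact hM t ⟨ht, h⟩
  · have huneg : ∀ r ∈ Icc s t, u r ≤ 0 := fun r hr => (hB t (le_of_lt h) htT r hr).1
    have hfanti : AntitoneOn f (Icc s t) := by
      apply antitoneOn_of_deriv_nonpos (convex_Icc _ _) hcf.continuousOn
      · intro x hx
        exact (hdf x).differentiableWithinAt
      · intro x hx
        rw [interior_Icc] at hx
        exact huneg x ⟨le_of_lt hx.1, le_of_lt hx.2⟩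
    have hft : f t ≤ f s := hfanti ⟨le_refl _, le_of_lt h⟩ ⟨le_of_lt h, le_refl _⟩ (le_of_lt h)
    exact le_trans hft (hM s ⟨le_of_lt hs0, le_refl _⟩)
end

section
/- Let β ∈ (0,1], a ≥ 0 and b ≥ 1. Suppose f and g are two bounded solutions of the equation f''' + f·f'' + β·f'·(f'−1) = 0 on [0, +∞) with f(0) = g(0) = a, f'(0) = g'(0) = b, f'' < 0 and g'' < 0 on [0, +∞), and f'(t) → 0 and g'(t) → 0 as t → +∞. Then f''(0) = g''(0) (and hence f = g); i.e. there is at most one shooting parameter c for which the solution of the initial value problem satisfies f'(+∞) = 0. -/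
open Set Filter Topology

/-- Bundle of hypotheses for one solution. -/
structure IsSolS (β a b : ℝ) (f : ℝ → ℝ) : Prop where
  smooth : ContDiff ℝ 3 f
  eqn : ∀ t ∈ Ici (0 : ℝ), deriv (deriv (deriv f)) t + f t * deriv (deriv f) t
      + β * deriv f t * (deriv f t - 1) = 0
  bdd : ∃ M : ℝ, ∀ t ∈ Ici (0 : ℝ), |f t| ≤ M
  init0 : f 0 = a
  init1 : deriv f 0 = b
  conc : ∀ t ∈ Ici (0 : ℝ), deriv (deriv f) t < 0
  lim : Tendsto (deriv f) atTop (𝓝 0)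

namespace IsSolS

variable {β a b : ℝ} {f : ℝ → ℝ}

lemma cd2 (s : IsSolS β a b f) : ContDiff ℝ 2 (deriv f) := by
  have hf := s.smooth
  rw [show (3 : WithTop ℕ∞) = 2 + 1 from rfl, contDiff_succ_iff_deriv] at hf
  exact hf.2.2

lemma cd1 (s : IsSolS β a b f) : ContDiff ℝ 1 (deriv (deriv f)) := by
  have hf := s.cd2
  rw [show (2 : WithTop ℕ∞) = 1 + 1 from rfl, contDiff_succ_iff_deriv] at hf
  exact hf.2.2

lemma hd1 (s : IsSolS β a b f) (t : ℝ) : HasDerivAt f (deriv f t) t :=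
  ((s.smooth.differentiable (by norm_num)) t).hasDerivAt

lemma hd2 (s : IsSolS β a b f) (t : ℝ) : HasDerivAt (deriv f) (deriv (deriv f) t) t :=
  ((s.cd2.differentiable (by norm_num)) t).hasDerivAt

lemma hd3 (s : IsSolS β a b f) (t : ℝ) :
    HasDerivAt (deriv (deriv f)) (deriv (deriv (deriv f)) t) t :=
  ((s.cd1.differentiable (by norm_num)) t).hasDerivAt

lemma cont0 (s : IsSolS β a b f) : Continuous f := s.smooth.continuous
lemma cont1 (s : IsSolS β a b f) : Continuous (deriv f) := s.cd2.continuous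
lemma cont2 (s : IsSolS β a b f) : Continuous (deriv (deriv f)) := s.cd1.continuous

/-- `f'` is strictly decreasing on `[0,∞)`. -/
lemma anti (s : IsSolS β a b f) : StrictAntiOn (deriv f) (Ici 0) := by
  apply strictAntiOn_of_deriv_neg (convex_Ici 0) (s.cont1.continuousOn)
  intro t ht
  rw [interior_Ici] at ht
  exact (s.hd2 t).deriv ▸ s.conc t (mem_Ici.mpr (le_of_lt ht))

/-- `f' > 0` on `[0,∞)`. -/
lemma pos (s : IsSolS β a b f) : ∀ t ∈ Ici (0 : ℝ), 0 < deriv f t := by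
  intro t ht
  by_contra h
  push_neg at h
  have ht1 : (t + 1 : ℝ) ∈ Ici (0:ℝ) := by simp only [mem_Ici] at ht ⊢; linarith
  have hy : deriv f (t + 1) < deriv f t := s.anti ht ht1 (by linarith)
  have hev : ∀ᶠ u in atTop, deriv f u ≤ deriv f (t + 1) := by
    filter_upwards [eventually_ge_atTop (t + 1)] with u hu
    rcases eq_or_lt_of_le hu with h' | h'
    · rw [h']
    · exact (s.anti ht1 (le_trans ht1 hu : (0:ℝ) ≤ u) h').le
  have h0 : (0:ℝ) ≤ deriv f (t + 1) := le_of_tendsto s.lim hev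
  linarith

/-- `f' ≤ b` on `[0,∞)`. -/
lemma le_b (s : IsSolS β a b f) : ∀ t ∈ Ici (0 : ℝ), deriv f t ≤ b := by
  intro t ht
  rcases eq_or_lt_of_le (mem_Ici.mp ht) with h | h
  · rw [← h, s.init1]
  · exact s.init1 ▸ (s.anti (mem_Ici.mpr (le_refl (0:ℝ))) ht h).le

/-- The auxiliary function φ = f'' + f f'. -/
noncomputable def phi (f : ℝ → ℝ) : ℝ → ℝ := fun t => deriv (deriv f) t + f t * deriv f t

lemma phi_hasDeriv (s : IsSolS β a b f) (t : ℝ) :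
    HasDerivAt (phi f)
      (deriv (deriv (deriv f)) t + (deriv f t * deriv f t + f t * deriv (deriv f) t)) t :=
  (s.hd3 t).add ((s.hd1 t).mul (s.hd2 t))

lemma phi_deriv_eq (s : IsSolS β a b f) {t : ℝ} (ht : t ∈ Ici (0:ℝ)) :
    HasDerivAt (phi f) ((1 - β) * (deriv f t)^2 + β * deriv f t) t := by
  have h := s.phi_hasDeriv t
  have he := s.eqn t ht
  have : deriv (deriv (deriv f)) t + (deriv f t * deriv f t + f t * deriv (deriv f) t)
      = (1 - β) * (deriv f t)^2 + β * deriv f t := by nlinarith [he]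
  rwa [this] at h

/-- φ is monotone on `[0,∞)`. -/
lemma phi_mono (s : IsSolS β a b f) (hβ1 : 0 < β) (hβ2 : β ≤ 1) :
    MonotoneOn (phi f) (Ici 0) := by
  have hc : Continuous (phi f) := s.cont2.add (s.cont0.mul s.cont1)
  apply monotoneOn_of_deriv_nonneg (convex_Ici 0) hc.continuousOn
  · intro t ht
    rw [interior_Ici] at ht
    exact ((s.phi_hasDeriv t).differentiableAt.differentiableWithinAt)
  · intro t ht
    rw [interior_Ici] at ht
    rw [(s.phi_deriv_eq (mem_Ici.mpr (le_of_lt ht) : t ∈ Ici (0:ℝ))).deriv]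
    have hp := s.pos t (mem_Ici.mpr (le_of_lt ht))
    nlinarith

/-- φ tends to 0 at infinity, and f'' tends to 0. -/
lemma ff'_lim (s : IsSolS β a b f) : Tendsto (fun t => f t * deriv f t) atTop (𝓝 0) := by
  obtain ⟨M, hM⟩ := s.bdd
  apply squeeze_zero_norm' (a := fun t => M * |deriv f t|)
  · filter_upwards [eventually_ge_atTop (0:ℝ)] with t ht
    rw [Real.norm_eq_abs, abs_mul]
    exact mul_le_mul_of_nonneg_right (hM t ht) (abs_nonneg _)
  · have h := s.lim.abs
    rw [abs_zero] at h
    simpa using h.const_mul M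

lemma phi_lim (s : IsSolS β a b f) (hβ1 : 0 < β) (hβ2 : β ≤ 1) :
    Tendsto (phi f) atTop (𝓝 0) ∧ Tendsto (deriv (deriv f)) atTop (𝓝 0) := by
  obtain ⟨M, hM⟩ := s.bdd
  have hM0 : 0 ≤ M := le_trans (abs_nonneg _) (hM 0 Set.self_mem_Ici)
  have hb0 : 0 < b := by rw [← s.init1]; exact s.pos 0 Set.self_mem_Ici
  -- ψ : globally monotone version of φ
  set ψ : ℝ → ℝ := fun t => phi f (max t 0) with hψdef
  have hmem : ∀ t : ℝ, max t 0 ∈ Ici (0:ℝ) := fun t => le_max_right t 0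
  have hmono : Monotone ψ := fun t u htu =>
    s.phi_mono hβ1 hβ2 (hmem t) (hmem u) (max_le_max htu le_rfl)
  have hbound : ∀ t : ℝ, ψ t ≤ M * b := by
    intro t
    have h2 := s.conc _ (hmem t)
    have h1 : f (max t 0) * deriv f (max t 0) ≤ M * b := by
      have hp := s.pos _ (hmem t)
      have hlb := s.le_b _ (hmem t)
      have habs := hM _ (hmem t)
      nlinarith [abs_nonneg (f (max t 0)), le_abs_self (f (max t 0)),
        neg_abs_le (f (max t 0))]
    simp only [hψdef, phi]
    linarith
  have hψlim : Tendsto ψ atTop (𝓝 (⨆ t, ψ t)) :=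
    tendsto_atTop_ciSup hmono ⟨M * b, by rintro x ⟨t, rfl⟩; exact hbound t⟩
  set L := ⨆ t, ψ t with hLdef
  have hEq : (fun t => phi f t) =ᶠ[atTop] ψ := by
    filter_upwards [eventually_ge_atTop (0:ℝ)] with t ht
    simp [hψdef, max_eq_left ht]
  have hphiL : Tendsto (phi f) atTop (𝓝 L) := hψlim.congr' hEq.symm
  have hf2lim : Tendsto (deriv (deriv f)) atTop (𝓝 L) := by
    have h := hphiL.sub (s.ff'_lim)
    rw [sub_zero] at h
    apply h.congr
    intro t
    simp [phi]
  -- L ≤ 0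
  have hL0 : L ≤ 0 := by
    apply le_of_tendsto hf2lim
    filter_upwards [eventually_ge_atTop (0:ℝ)] with t ht
    exact (s.conc t ht).le
  -- L < 0 impossible
  have hLeq : L = 0 := by
    rcases eq_or_lt_of_le hL0 with h | h
    · exact h
    exfalso
    have hev : ∀ᶠ t in atTop, deriv (deriv f) t < L / 2 :=
      hf2lim.eventually_lt_const (by linarith)
    obtain ⟨T, hT⟩ := eventually_atTop.mp hev
    set T' := max T 0 with hT'def
    have hT'0 : (0:ℝ) ≤ T' := le_max_right T 0
    have hT'T : T ≤ T' := le_max_left T 0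
    have hfT' : 0 < deriv f T' := s.pos T' hT'0
    set D : ℝ := 2 * deriv f T' / (-L) + 1 with hDdef
    have hnegL : 0 < -L := neg_pos.mpr h
    have hD0 : 0 < D := by positivity
    set t := T' + D with htdef
    have hTt : T' < t := by simp [htdef]; linarith
    obtain ⟨ξ, hξ, hslope⟩ := exists_hasDerivAt_eq_slope (deriv f) (deriv (deriv f)) hTt
      (s.cont1.continuousOn) (fun x _ => s.hd2 x)
    have hξT : T ≤ ξ := le_trans hT'T (le_of_lt hξ.1)
    have hξ2 : deriv (deriv f) ξ < L / 2 := hT ξ hξT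
    have htT' : t - T' = D := by ring
    rw [htT'] at hslope
    have hft : 0 < deriv f t := s.pos t (mem_Ici.mpr (by rw [htdef]; linarith))
    have hfd : deriv f t - deriv f T' = deriv (deriv f) ξ * D :=
      (div_eq_iff (ne_of_gt hD0)).mp hslope.symm
    have hDL : D * (-L) = 2 * deriv f T' + (-L) := by
      rw [hDdef, add_mul, div_mul_cancel₀ _ (ne_of_gt hnegL), one_mul]
    have h1 : deriv f t - deriv f T' < (L / 2) * D := by
      rw [hfd]
      calc deriv (deriv f) ξ * D < (L / 2) * D := mul_lt_mul_of_pos_right hξ2 hD0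
        _ = (L / 2) * D := rfl
    have h1m := mul_lt_mul_of_pos_right h1 hnegL
    have h2 : (L / 2) * D * (-L) = (L / 2) * (2 * deriv f T' + (-L)) := by
      rw [mul_assoc, hDL]
    nlinarith [mul_pos hft hnegL, sq_nonneg L]
  exact ⟨hLeq ▸ hphiL, hLeq ▸ hf2lim⟩

/-- Key comparison: for two solutions, `g''(0) ≤ f''(0)` is impossible to fail:
we show `¬ f''(0) < g''(0)`. -/
lemma key {g : ℝ → ℝ} (sf : IsSolS β a b f) (sg : IsSolS β a b g)
    (hβ1 : 0 < β) (hβ2 : β ≤ 1) (hb : 1 ≤ b) :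
    ¬ deriv (deriv f) 0 < deriv (deriv g) 0 := by
  intro hlt
  set c := deriv (deriv f) 0 with hcdef
  set d := deriv (deriv g) 0 with hddef
  have hb0 : 0 < b := by rw [← sg.init1]; exact sg.pos 0 Set.self_mem_Ici
  -- monotone inverse comparison for g'
  have mono_inv : ∀ {u1 u2 : ℝ}, 0 ≤ u1 → 0 ≤ u2 → deriv g u1 < deriv g u2 → u2 < u1 := by
    intro u1 u2 h1 h2 hltu
    by_contra hle
    push_neg at hle
    rcases eq_or_lt_of_le hle with h | h
    · rw [h] at hltu; exact lt_irrefl _ hltu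
    · exact absurd (sg.anti (mem_Ici.mpr h1) (mem_Ici.mpr h2) h) (not_lt.mpr hltu.le)
  -- surjectivity of g' onto (0, b]
  have hsurj : ∀ v : ℝ, 0 < v → v ≤ b → ∃ u, 0 ≤ u ∧ deriv g u = v := by
    intro v hv1 hv2
    have hev : ∀ᶠ u in atTop, deriv g u < v := sg.lim.eventually_lt_const hv1
    obtain ⟨u₀, hu₀⟩ := (hev.and (eventually_ge_atTop (0:ℝ))).exists
    have hsub := intermediate_value_Icc' hu₀.2 (sg.cont1.continuousOn)
    have hvm : v ∈ Icc (deriv g u₀) (deriv g 0) := ⟨hu₀.1.le, by rw [sg.init1]; exact hv2⟩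
    obtain ⟨x, hx, hxv⟩ := hsub hvm
    exact ⟨x, hx.1, hxv⟩
  choose invg0 hi1 hi2 using hsurj
  set invg : ℝ → ℝ := fun v => if h : 0 < v ∧ v ≤ b then invg0 v h.1 h.2 else 0 with hinvgdef
  have hinv0 : ∀ {v : ℝ}, 0 < v → v ≤ b → 0 ≤ invg v := by
    intro v hv1 hv2
    simp only [hinvgdef, dif_pos (⟨hv1, hv2⟩ : 0 < v ∧ v ≤ b)]
    exact hi1 v _ _
  have hinveq : ∀ {v : ℝ}, 0 < v → v ≤ b → deriv g (invg v) = v := by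
    intro v hv1 hv2
    simp only [hinvgdef, dif_pos (⟨hv1, hv2⟩ : 0 < v ∧ v ≤ b)]
    exact hi2 v _ _
  -- continuity of invg on (0, b]
  have hinvcont : ContinuousOn invg (Ioc 0 b) := by
    intro v₀ hv₀
    rw [Metric.continuousWithinAt_iff]
    intro ε hε
    set u₀ := invg v₀ with hu₀def
    have hu₀0 : 0 ≤ u₀ := hinv0 hv₀.1 hv₀.2
    have hgu₀ : deriv g u₀ = v₀ := hinveq hv₀.1 hv₀.2
    have hp : 0 < deriv g u₀ - deriv g (u₀ + ε / 2) := by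
      have := sg.anti (mem_Ici.mpr hu₀0)
        (mem_Ici.mpr (show (0:ℝ) ≤ u₀ + ε / 2 by linarith))
        (show u₀ < u₀ + ε / 2 by linarith)
      linarith
    -- choose δ
    by_cases hcase : ε / 2 ≤ u₀
    · have hq : 0 < deriv g (u₀ - ε / 2) - deriv g u₀ := by
        have := sg.anti (mem_Ici.mpr (show (0:ℝ) ≤ u₀ - ε / 2 by linarith))
          (mem_Ici.mpr hu₀0) (show u₀ - ε / 2 < u₀ by linarith)
        linarith
      refine ⟨min (deriv g u₀ - deriv g (u₀ + ε / 2)) (deriv g (u₀ - ε / 2) - deriv g u₀),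
        lt_min hp hq, ?_⟩
      intro v hv hdist
      rw [Real.dist_eq] at hdist ⊢
      have hu : invg v < u₀ + ε / 2 := by
        apply mono_inv (show (0:ℝ) ≤ u₀ + ε / 2 by linarith) (hinv0 hv.1 hv.2)
        rw [hinveq hv.1 hv.2]
        have h1 := (abs_lt.mp hdist).1
        have h2 := min_le_left (deriv g u₀ - deriv g (u₀ + ε / 2))
          (deriv g (u₀ - ε / 2) - deriv g u₀)
        linarith
      have hl : u₀ - ε / 2 < invg v := by
        apply mono_inv (hinv0 hv.1 hv.2) (show (0:ℝ) ≤ u₀ - ε / 2 by linarith)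
        rw [hinveq hv.1 hv.2]
        have h1 := (abs_lt.mp hdist).2
        have h2 := min_le_right (deriv g u₀ - deriv g (u₀ + ε / 2))
          (deriv g (u₀ - ε / 2) - deriv g u₀)
        linarith
      rw [abs_lt]
      constructor <;> [linarith; linarith]
    · push_neg at hcase
      refine ⟨deriv g u₀ - deriv g (u₀ + ε / 2), hp, ?_⟩
      intro v hv hdist
      rw [Real.dist_eq] at hdist ⊢
      have hu : invg v < u₀ + ε / 2 := by
        apply mono_inv (show (0:ℝ) ≤ u₀ + ε / 2 by linarith) (hinv0 hv.1 hv.2)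
        rw [hinveq hv.1 hv.2]
        have h1 := (abs_lt.mp hdist).1
        linarith
      have hl : u₀ - ε / 2 < invg v := lt_of_lt_of_le (by linarith) (hinv0 hv.1 hv.2)
      rw [abs_lt]
      constructor <;> [linarith; linarith]
  -- θ
  set θ : ℝ → ℝ := fun t => invg (deriv f (max t 0)) with hθdef
  have hfmax1 : ∀ t : ℝ, 0 < deriv f (max t 0) := fun t => sf.pos _ (mem_Ici.mpr (le_max_right t 0))
  have hfmax2 : ∀ t : ℝ, deriv f (max t 0) ≤ b := fun t => sf.le_b _ (mem_Ici.mpr (le_max_right t 0))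
  have hθ0 : ∀ t : ℝ, 0 ≤ θ t := fun t => hinv0 (hfmax1 t) (hfmax2 t)
  have hθeq : ∀ t : ℝ, 0 ≤ t → deriv g (θ t) = deriv f t := by
    intro t ht
    simp only [hθdef]
    rw [max_eq_left ht]
    exact hinveq (by rw [← max_eq_left ht]; exact hfmax1 t) (by rw [← max_eq_left ht]; exact hfmax2 t)
  have hθzero : θ 0 = 0 := by
    have h1 : deriv g (θ 0) = deriv g 0 := by
      rw [hθeq 0 le_rfl, sf.init1, sg.init1]
    exact (sg.anti.injOn (mem_Ici.mpr (hθ0 0)) Set.self_mem_Ici h1)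
  have hθcont : Continuous θ := by
    apply hinvcont.comp_continuous (sf.cont1.comp (continuous_id.max continuous_const))
    intro t
    exact ⟨hfmax1 t, hfmax2 t⟩
  -- derivative of θ for t > 0
  have hθderiv : ∀ t : ℝ, 0 < t →
      HasDerivAt θ ((deriv (deriv g) (θ t))⁻¹ * deriv (deriv f) t) t := by
    intro t ht
    have hftb : deriv f t < b := by
      rw [← sf.init1]
      exact sf.anti Set.self_mem_Ici (mem_Ici.mpr ht.le) ht
    have hft0 : 0 < deriv f t := sf.pos t (mem_Ici.mpr ht.le)
    have hmax : max t 0 = t := max_eq_left ht.le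
    have hIv : invg (deriv f t) = θ t := by simp only [hθdef, hmax]
    have hcA : ContinuousAt invg (deriv f t) := by
      apply hinvcont.continuousAt (Ioc_mem_nhds hft0 hftb)
    have hgne : deriv (deriv g) (invg (deriv f t)) ≠ 0 :=
      ne_of_lt (sg.conc _ (mem_Ici.mpr (by rw [hIv]; exact hθ0 t)))
    have hfg : ∀ᶠ y in 𝓝 (deriv f t), deriv g (invg y) = y := by
      have hIoo : Ioo (0:ℝ) b ∈ 𝓝 (deriv f t) := Ioo_mem_nhds hft0 hftb
      filter_upwards [hIoo] with y hy
      exact hinveq hy.1 hy.2.le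
    have hinv_at : HasDerivAt invg (deriv (deriv g) (invg (deriv f t)))⁻¹ (deriv f t) :=
      HasDerivAt.of_local_left_inverse hcA (sg.hd2 _) hgne hfg
    have hcomp : HasDerivAt (fun u => invg (deriv f u))
        ((deriv (deriv g) (invg (deriv f t)))⁻¹ * deriv (deriv f) t) t :=
      hinv_at.comp t (sf.hd2 t)
    rw [hIv] at hcomp
    apply hcomp.congr_of_eventuallyEq
    filter_upwards [eventually_gt_nhds ht] with u hu
    simp only [hθdef, max_eq_left hu.le]
  -- W and Φ
  set W : ℝ → ℝ := fun t => deriv (deriv g) (θ t) - deriv (deriv f) t with hWdef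
  set Φ : ℝ → ℝ := fun t => phi g (θ t) - phi f t with hΦdef
  have hWcont : Continuous W := (sg.cont2.comp hθcont).sub sf.cont2
  have hΦcont : Continuous Φ :=
    ((sg.cont2.add (sg.cont0.mul sg.cont1)).comp hθcont).sub
      (sf.cont2.add (sf.cont0.mul sf.cont1))
  have hW0 : W 0 = d - c := by simp only [hWdef, hθzero, hcdef, hddef]
  have hΦ0 : Φ 0 = d - c := by
    simp only [hΦdef, hθzero, phi, sf.init0, sg.init0, sf.init1, sg.init1, hcdef, hddef]
    ring
  -- derivative of Φ for t > 0
  have hΦderiv : ∀ t : ℝ, 0 < t → HasDerivAt Φ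
      (((1 - β) * (deriv f t)^2 + β * deriv f t) *
        ((deriv (deriv g) (θ t))⁻¹ * deriv (deriv f) t - 1)) t := by
    intro t ht
    have h1 : HasDerivAt (fun u => phi g (θ u))
        (((1 - β) * (deriv g (θ t))^2 + β * deriv g (θ t)) *
          ((deriv (deriv g) (θ t))⁻¹ * deriv (deriv f) t)) t :=
      (sg.phi_deriv_eq (mem_Ici.mpr (hθ0 t))).comp t (hθderiv t ht)
    have h2 := sf.phi_deriv_eq (mem_Ici.mpr ht.le)
    have h3 := h1.sub h2
    rw [hθeq t ht.le] at h3
    have : ((1 - β) * (deriv f t)^2 + β * deriv f t) *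
          ((deriv (deriv g) (θ t))⁻¹ * deriv (deriv f) t)
        - ((1 - β) * (deriv f t)^2 + β * deriv f t)
      = ((1 - β) * (deriv f t)^2 + β * deriv f t) *
        ((deriv (deriv g) (θ t))⁻¹ * deriv (deriv f) t - 1) := by ring
    rw [this] at h3
    exact h3
  -- monotonicity of Φ where W ≥ 0
  have hΦsign : ∀ t : ℝ, 0 < t → 0 ≤ W t →
      0 ≤ ((1 - β) * (deriv f t)^2 + β * deriv f t) *
        ((deriv (deriv g) (θ t))⁻¹ * deriv (deriv f) t - 1) := by
    intro t ht hWt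
    have hft0 : 0 < deriv f t := sf.pos t (mem_Ici.mpr ht.le)
    have hG : deriv (deriv g) (θ t) < 0 := sg.conc _ (mem_Ici.mpr (hθ0 t))
    have hF : deriv (deriv f) t ≤ deriv (deriv g) (θ t) := by
      simp only [hWdef] at hWt; linarith
    have hGinv : deriv (deriv g) (θ t) * (deriv (deriv g) (θ t))⁻¹ = 1 :=
      mul_inv_cancel₀ (ne_of_lt hG)
    have hGinvneg : (deriv (deriv g) (θ t))⁻¹ < 0 := inv_lt_zero.mpr hG
    have h1 : (1:ℝ) ≤ (deriv (deriv g) (θ t))⁻¹ * deriv (deriv f) t := by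
      have := mul_le_mul_of_nonpos_right hF hGinvneg.le
      calc (1:ℝ) = deriv (deriv g) (θ t) * (deriv (deriv g) (θ t))⁻¹ := hGinv.symm
        _ ≤ deriv (deriv f) t * (deriv (deriv g) (θ t))⁻¹ := by linarith
        _ = (deriv (deriv g) (θ t))⁻¹ * deriv (deriv f) t := by ring
    have h2 : (0:ℝ) ≤ (1 - β) * (deriv f t)^2 + β * deriv f t := by nlinarith
    nlinarith
  have hΦmono : ∀ T : Set ℝ, Convex ℝ T → (∀ t ∈ interior T, 0 < t) →
      (∀ t ∈ interior T, 0 ≤ W t) → MonotoneOn Φ T := by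
    intro T hconv hint hWT
    apply monotoneOn_of_deriv_nonneg hconv hΦcont.continuousOn
    · intro t ht
      exact (hΦderiv t (hint t ht)).differentiableAt.differentiableWithinAt
    · intro t ht
      rw [(hΦderiv t (hint t ht)).deriv]
      exact hΦsign t (hint t ht) (hWT t ht)
  -- W > 0 on [0, ∞)
  have hWpos : ∀ t : ℝ, 0 ≤ t → 0 < W t := by
    by_contra hcon
    push_neg at hcon
    obtain ⟨t₁, ht₁0, ht₁⟩ := hcon
    set S : Set ℝ := {t | 0 ≤ t ∧ W t ≤ 0} with hSdef
    have hSne : S.Nonempty := ⟨t₁, ht₁0, ht₁⟩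
    have hSbdd : BddBelow S := ⟨0, fun x hx => hx.1⟩
    have hSclosed : IsClosed S := by
      have : S = Ici 0 ∩ W ⁻¹' (Iic 0) := by
        ext x; simp [hSdef, mem_Ici, mem_Iic]
      rw [this]
      exact isClosed_Ici.inter (isClosed_Iic.preimage hWcont)
    set τ := sInf S with hτdef
    have hτS : τ ∈ S := hSclosed.csInf_mem hSne hSbdd
    have hτ0 : 0 ≤ τ := hτS.1
    have hWτ : W τ ≤ 0 := hτS.2
    have hτpos : 0 < τ := by
      rcases eq_or_lt_of_le hτ0 with h | h
      · exfalso; rw [← h] at hWτ; rw [hW0] at hWτ; linarith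
      · exact h
    have hWbefore : ∀ t : ℝ, 0 ≤ t → t < τ → 0 < W t := by
      intro t ht htτ
      by_contra hW
      push_neg at hW
      exact absurd (csInf_le hSbdd (⟨ht, hW⟩ : t ∈ S)) (not_le.mpr htτ)
    have hWτ0 : W τ = 0 := by
      refine le_antisymm hWτ ?_
      have htd : Tendsto W (𝓝[<] τ) (𝓝 (W τ)) :=
        (hWcont.continuousAt (x := τ)).continuousWithinAt
      apply ge_of_tendsto htd
      filter_upwards [Ioo_mem_nhdsLT hτpos] with u hu
      exact (hWbefore u hu.1.le hu.2).le
    -- Φ is monotone on [0, τ]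
    have hmono : MonotoneOn Φ (Icc 0 τ) := by
      apply hΦmono _ (convex_Icc 0 τ)
      · intro t ht; rw [interior_Icc] at ht; exact ht.1
      · intro t ht; rw [interior_Icc] at ht; exact (hWbefore t ht.1.le ht.2).le
    have hΦτ : d - c ≤ Φ τ := by
      rw [← hΦ0]
      exact hmono (left_mem_Icc.mpr hτ0) (right_mem_Icc.mpr hτ0) hτ0
    -- F := g(θτ) - f(τ) > 0
    have hgfeq : deriv (deriv g) (θ τ) = deriv (deriv f) τ := by
      simp only [hWdef] at hWτ0; linarith
    have hgderiv : deriv g (θ τ) = deriv f τ := hθeq τ hτ0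
    have hfτ : 0 < deriv f τ := sf.pos τ (mem_Ici.mpr hτ0)
    have hΦτexp : Φ τ = W τ + deriv f τ * (g (θ τ) - f τ) := by
      simp only [hΦdef, hWdef, phi, hgderiv]; ring
    have hFτ : 0 < g (θ τ) - f τ := by
      rw [hWτ0, zero_add] at hΦτexp
      by_contra hF
      push_neg at hF
      nlinarith
    -- derivative of W at τ
    have hWd : HasDerivAt W (deriv (deriv (deriv g)) (θ τ)
        * ((deriv (deriv g) (θ τ))⁻¹ * deriv (deriv f) τ) - deriv (deriv (deriv f)) τ) τ :=
      ((sg.hd3 (θ τ)).comp τ (hθderiv τ hτpos)).sub (sf.hd3 τ)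
    have hone : (deriv (deriv g) (θ τ))⁻¹ * deriv (deriv f) τ = 1 := by
      rw [hgfeq]
      exact inv_mul_cancel₀ (ne_of_lt (sf.conc τ (mem_Ici.mpr hτ0)))
    have hWdval : deriv (deriv (deriv g)) (θ τ)
        * ((deriv (deriv g) (θ τ))⁻¹ * deriv (deriv f) τ) - deriv (deriv (deriv f)) τ
        = -deriv (deriv f) τ * (g (θ τ) - f τ) := by
      rw [hone, mul_one]
      have heg := sg.eqn (θ τ) (mem_Ici.mpr (hθ0 τ))
      have hef := sf.eqn τ (mem_Ici.mpr hτ0)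
      rw [hgderiv, hgfeq] at heg
      linear_combination heg - hef
    rw [hWdval] at hWd
    have hWdpos : 0 < -deriv (deriv f) τ * (g (θ τ) - f τ) := by
      have := sf.conc τ (mem_Ici.mpr hτ0); nlinarith
    have hWwithin : HasDerivWithinAt W (-deriv (deriv f) τ * (g (θ τ) - f τ)) (Iio τ) τ :=
      hWd.hasDerivWithinAt
    rw [hasDerivWithinAt_iff_tendsto_slope' (notMem_Iio.mpr le_rfl)] at hWwithin
    have hle : -deriv (deriv f) τ * (g (θ τ) - f τ) ≤ 0 := by
      apply le_of_tendsto hWwithin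
      filter_upwards [Ioo_mem_nhdsLT hτpos] with u hu
      have hWu : 0 < W u := hWbefore u hu.1.le hu.2
      rw [slope_def_field]
      rw [hWτ0]
      exact div_nonpos_of_nonneg_of_nonpos (by linarith) (by linarith [hu.2])
    linarith
  -- endgame
  have hθtop : Tendsto θ atTop atTop := by
    rw [tendsto_atTop]
    intro B
    set B' := max B 0 with hB'def
    have hB'0 : (0:ℝ) ≤ B' := le_max_right B 0
    have hgB : 0 < deriv g (B' + 1) := sg.pos _ (mem_Ici.mpr (by linarith))
    have hev : ∀ᶠ t in atTop, deriv f t < deriv g (B' + 1) := sf.lim.eventually_lt_const hgB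
    filter_upwards [hev, eventually_ge_atTop (0:ℝ)] with t ht ht0
    have hBθ : B' + 1 < θ t := by
      apply mono_inv (hθ0 t) (by linarith : (0:ℝ) ≤ B' + 1)
      rw [hθeq t ht0]; exact ht
    linarith [le_max_left B 0]
  have hΦlim : Tendsto Φ atTop (𝓝 0) := by
    have h1 := ((sg.phi_lim hβ1 hβ2).1.comp hθtop).sub ((sf.phi_lim hβ1 hβ2).1)
    rw [sub_zero] at h1
    exact h1.congr fun t => rfl
  have hmonoIci : MonotoneOn Φ (Ici 0) := by
    apply hΦmono _ (convex_Ici 0)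
    · intro t ht; rw [interior_Ici] at ht; exact ht
    · intro t ht; rw [interior_Ici] at ht; exact (hWpos t ht.le).le
  have hge : ∀ᶠ t in atTop, d - c ≤ Φ t := by
    filter_upwards [eventually_ge_atTop (0:ℝ)] with t ht
    rw [← hΦ0]
    exact hmonoIci Set.self_mem_Ici (mem_Ici.mpr ht) ht
  have hfin : d - c ≤ 0 := ge_of_tendsto hΦlim hge
  linarith

end IsSolS

/-- Uniqueness of solutions with identical initial data (Grönwall). -/
lemma eq_on_of_same_init {β a b : ℝ} {f g : ℝ → ℝ}
    (sf : IsSolS β a b f) (sg : IsSolS β a b g)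
    (h2 : deriv (deriv f) 0 = deriv (deriv g) 0) :
    Set.EqOn f g (Ici (0 : ℝ)) := by
  intro T hT
  rw [mem_Ici] at hT
  -- bound all six functions on [0, T]
  set m : ℝ → ℝ := fun t => |f t| + |g t| + |deriv f t| + |deriv g t|
      + |deriv (deriv f) t| + |deriv (deriv g) t| with hmdef
  have hmcont : ContinuousOn m (Icc 0 T) :=
    (((((sf.cont0.abs.add sg.cont0.abs).add sf.cont1.abs).add sg.cont1.abs).add
      sf.cont2.abs).add sg.cont2.abs).continuousOn
  obtain ⟨C, hC⟩ := isCompact_Icc.exists_bound_of_continuousOn hmcont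
  have hCb : ∀ x ∈ Icc (0:ℝ) T, m x ≤ C := by
    intro x hx
    exact le_trans (le_abs_self _) (by simpa [Real.norm_eq_abs] using hC x hx)
  have hC0 : 0 ≤ C := by
    have h := hCb 0 (left_mem_Icc.mpr hT)
    have hm0 : 0 ≤ m 0 := by positivity
    linarith
  set K : ℝ := 1 + 2 * C + |β| * (2 * C + 1) with hKdef
  have hK0 : 0 ≤ K := by positivity
  -- trajectory difference
  set F : ℝ → ℝ × ℝ × ℝ := fun t => (g t - f t, deriv g t - deriv f t,
      deriv (deriv g) t - deriv (deriv f) t) with hFdef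
  set Fd : ℝ → ℝ × ℝ × ℝ := fun t => (deriv g t - deriv f t,
      deriv (deriv g) t - deriv (deriv f) t,
      deriv (deriv (deriv g)) t - deriv (deriv (deriv f)) t) with hFddef
  have hFder : ∀ t : ℝ, HasDerivAt F (Fd t) t := fun t =>
    ((sg.hd1 t).sub (sf.hd1 t)).prodMk
      (((sg.hd2 t).sub (sf.hd2 t)).prodMk ((sg.hd3 t).sub (sf.hd3 t)))
  have hFcont : ContinuousOn F (Icc 0 T) := fun t ht => (hFder t).continuousAt.continuousWithinAt
  have hF0 : F 0 = 0 := by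
    simp only [hFdef, sf.init0, sg.init0, sf.init1, sg.init1, h2, sub_self]
    rfl
  have hbound : ∀ x ∈ Ico (0:ℝ) T, ‖Fd x‖ ≤ K * ‖F x‖ + 0 := by
    intro x hx
    have hxI : x ∈ Icc (0:ℝ) T := ⟨hx.1, hx.2.le⟩
    have hxge : x ∈ Ici (0:ℝ) := mem_Ici.mpr hx.1
    have hN0 : 0 ≤ ‖F x‖ := norm_nonneg _
    -- component bounds from below
    have hN1 : |g x - f x| ≤ ‖F x‖ := by
      have := norm_fst_le (F x)
      simpa [hFdef, Real.norm_eq_abs] using this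
    have hN2 : |deriv g x - deriv f x| ≤ ‖F x‖ := by
      have h1 := norm_fst_le (F x).2
      have h2' := norm_snd_le (F x)
      simp only [hFdef, Real.norm_eq_abs] at h1 h2'
      exact le_trans h1 h2'
    have hN3 : |deriv (deriv g) x - deriv (deriv f) x| ≤ ‖F x‖ := by
      have h1 := norm_snd_le (F x).2
      have h2' := norm_snd_le (F x)
      simp only [hFdef, Real.norm_eq_abs] at h1 h2'
      exact le_trans h1 h2'
    -- individual bounds from above
    have hmle := hCb x hxI
    simp only [hmdef] at hmle
    have habsf := abs_nonneg (f x); have habsg := abs_nonneg (g x)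
    have habsf1 := abs_nonneg (deriv f x); have habsg1 := abs_nonneg (deriv g x)
    have habsf2 := abs_nonneg (deriv (deriv f) x); have habsg2 := abs_nonneg (deriv (deriv g) x)
    -- third-component identity from the ODEs
    have hef := sf.eqn x hxge
    have heg := sg.eqn x hxge
    have hid : deriv (deriv (deriv g)) x - deriv (deriv (deriv f)) x
        = (-(g x)) * (deriv (deriv g) x - deriv (deriv f) x)
          + (-(deriv (deriv f) x)) * (g x - f x)
          + (-(β * (deriv g x + deriv f x))) * (deriv g x - deriv f x)
          + β * (deriv g x - deriv f x) := by
      linear_combination heg - hef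
    have h3 : |deriv (deriv (deriv g)) x - deriv (deriv (deriv f)) x| ≤ K * ‖F x‖ := by
      rw [hid]
      have e1 : |(-(g x)) * (deriv (deriv g) x - deriv (deriv f) x)| ≤ C * ‖F x‖ := by
        rw [abs_mul, abs_neg]
        exact mul_le_mul (by linarith) hN3 (abs_nonneg _) hC0
      have e2 : |(-(deriv (deriv f) x)) * (g x - f x)| ≤ C * ‖F x‖ := by
        rw [abs_mul, abs_neg]
        exact mul_le_mul (by linarith) hN1 (abs_nonneg _) hC0
      have e3 : |(-(β * (deriv g x + deriv f x))) * (deriv g x - deriv f x)|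
          ≤ |β| * (2 * C) * ‖F x‖ := by
        rw [abs_mul, abs_neg, abs_mul]
        apply mul_le_mul _ hN2 (abs_nonneg _) (by positivity)
        apply mul_le_mul_of_nonneg_left _ (abs_nonneg β)
        calc |deriv g x + deriv f x| ≤ |deriv g x| + |deriv f x| := abs_add_le _ _
          _ ≤ 2 * C := by linarith
      have e4 : |β * (deriv g x - deriv f x)| ≤ |β| * ‖F x‖ := by
        rw [abs_mul]
        exact mul_le_mul_of_nonneg_left hN2 (abs_nonneg β)
      calc |(-(g x)) * (deriv (deriv g) x - deriv (deriv f) x)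
            + (-(deriv (deriv f) x)) * (g x - f x)
            + (-(β * (deriv g x + deriv f x))) * (deriv g x - deriv f x)
            + β * (deriv g x - deriv f x)|
          ≤ |(-(g x)) * (deriv (deriv g) x - deriv (deriv f) x)
            + (-(deriv (deriv f) x)) * (g x - f x)
            + (-(β * (deriv g x + deriv f x))) * (deriv g x - deriv f x)|
            + |β * (deriv g x - deriv f x)| := abs_add_le _ _
        _ ≤ |(-(g x)) * (deriv (deriv g) x - deriv (deriv f) x)
            + (-(deriv (deriv f) x)) * (g x - f x)|
            + |(-(β * (deriv g x + deriv f x))) * (deriv g x - deriv f x)|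
            + |β * (deriv g x - deriv f x)| := by
              have := abs_add_le ((-(g x)) * (deriv (deriv g) x - deriv (deriv f) x)
                + (-(deriv (deriv f) x)) * (g x - f x))
                ((-(β * (deriv g x + deriv f x))) * (deriv g x - deriv f x))
              linarith
        _ ≤ |(-(g x)) * (deriv (deriv g) x - deriv (deriv f) x)|
            + |(-(deriv (deriv f) x)) * (g x - f x)|
            + |(-(β * (deriv g x + deriv f x))) * (deriv g x - deriv f x)|
            + |β * (deriv g x - deriv f x)| := by
              have := abs_add_le ((-(g x)) * (deriv (deriv g) x - deriv (deriv f) x))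
                ((-(deriv (deriv f) x)) * (g x - f x))
              linarith
        _ ≤ C * ‖F x‖ + C * ‖F x‖ + |β| * (2 * C) * ‖F x‖ + |β| * ‖F x‖ := by linarith
        _ ≤ K * ‖F x‖ := by rw [hKdef]; nlinarith [abs_nonneg β]
    rw [add_zero]
    have hK1 : 1 ≤ K := by nlinarith [mul_nonneg (abs_nonneg β) hC0, abs_nonneg β]
    have hKN : ‖F x‖ ≤ K * ‖F x‖ := le_mul_of_one_le_left hN0 hK1
    rw [Prod.norm_def, Prod.norm_def]
    simp only [Real.norm_eq_abs]
    exact max_le (le_trans hN2 hKN) (max_le (le_trans hN3 hKN) h3)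
  have hgron := norm_le_gronwallBound_of_norm_deriv_right_le hFcont
    (fun x _ => (hFder x).hasDerivWithinAt) (by rw [hF0, norm_zero]) hbound
  have hFT := hgron T ⟨hT, le_rfl⟩
  rw [gronwallBound_ε0, zero_mul] at hFT
  have hFT0 : F T = 0 := norm_le_zero_iff.mp hFT
  have : g T - f T = 0 := congrArg Prod.fst hFT0
  linarith

/-- for `β ∈ (0,1]`, `a ≥ 0`, `b ≥ 1`, two bounded concave
solutions of `f''' + f f'' + β f'(f'-1) = 0` on `[0,∞)` with the same data
`f(0) = a`, `f'(0) = b` and `f' → 0` at `+∞` have the same second derivative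
at `0`, and hence coincide on `[0,∞)`: uniqueness of the shooting parameter
for the problem with `f'(+∞) = 0`. -/
theorem stmt14 (β a b : ℝ) (hβ1 : 0 < β) (hβ2 : β ≤ 1) (ha : 0 ≤ a) (hb : 1 ≤ b)
    (f g : ℝ → ℝ) (hf : ContDiff ℝ 3 f) (hg : ContDiff ℝ 3 g)
    (heqf : ∀ t ∈ Ici (0 : ℝ), deriv (deriv (deriv f)) t + f t * deriv (deriv f) t
      + β * deriv f t * (deriv f t - 1) = 0)
    (heqg : ∀ t ∈ Ici (0 : ℝ), deriv (deriv (deriv g)) t + g t * deriv (deriv g) t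
      + β * deriv g t * (deriv g t - 1) = 0)
    (hbdf : ∃ M : ℝ, ∀ t ∈ Ici (0 : ℝ), |f t| ≤ M)
    (hbdg : ∃ M : ℝ, ∀ t ∈ Ici (0 : ℝ), |g t| ≤ M)
    (hf0 : f 0 = a) (hg0 : g 0 = a)
    (hf0' : deriv f 0 = b) (hg0' : deriv g 0 = b)
    (hconcf : ∀ t ∈ Ici (0 : ℝ), deriv (deriv f) t < 0)
    (hconcg : ∀ t ∈ Ici (0 : ℝ), deriv (deriv g) t < 0)
    (hlimf : Tendsto (deriv f) atTop (𝓝 0))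
    (hlimg : Tendsto (deriv g) atTop (𝓝 0)) :
    deriv (deriv f) 0 = deriv (deriv g) 0 ∧ Set.EqOn f g (Ici (0 : ℝ)) := by
  have sf : IsSolS β a b f := ⟨hf, heqf, hbdf, hf0, hf0', hconcf, hlimf⟩
  have sg : IsSolS β a b g := ⟨hg, heqg, hbdg, hg0, hg0', hconcg, hlimg⟩
  have h2 : deriv (deriv f) 0 = deriv (deriv g) 0 :=
    le_antisymm (not_lt.mp (IsSolS.key sg sf hβ1 hβ2 hb))
      (not_lt.mp (IsSolS.key sf sg hβ1 hβ2 hb))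
  exact ⟨h2, eq_on_of_same_init sf sg h2⟩
end

section
/- Let β > 0 and let f be a solution of the equation f''' + f·f'' + β·f'·(f'−1) = 0 on [0, +∞) with f(0) ≥ 0 and f' > 0 on (0, +∞). Then f' has a finite limit at infinity, equal either to 0 or to 1; that is, either f'(t) → 0 as t → +∞, or f'(t) → 1 as t → +∞. -/
open Set Filter Topology


private lemma lin_growth {u u' : ℝ → ℝ} (hd : ∀ t, HasDerivAt u (u' t) t) {K : ℝ}
    (hK : Tendsto u' atTop (𝓝 K)) : Tendsto (fun t => u t / t) atTop (𝓝 K) := by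
  have key : ∀ ε > 0, ∀ᶠ t in atTop, |u t / t - K| < ε := by
    intro ε hε
    obtain ⟨T, hT⟩ : ∃ T, ∀ t ≥ T, |u' t - K| ≤ ε / 2 := by
      obtain ⟨N, hN⟩ := Metric.tendsto_atTop.1 hK (ε/2) (by linarith)
      exact ⟨N, fun t ht => by have := hN t ht; rw [Real.dist_eq] at this; linarith⟩
    set v : ℝ → ℝ := fun t => u t - K * t with hv
    have hvd : ∀ t ∈ Ici T, HasDerivWithinAt v (u' t - K) (Ici T) t := by
      intro t _
      exact ((hd t).sub ((hasDerivAt_id t).const_mul K)).hasDerivWithinAt.congr_deriv (by ring)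
    have hbd : ∀ t ≥ T, |v t - v T| ≤ ε/2 * (t - T) := by
      intro t ht
      have := Convex.norm_image_sub_le_of_norm_hasDerivWithin_le hvd
        (fun x hx => by simpa using hT x hx) (convex_Ici T) (self_mem_Ici) ht
      simpa [Real.norm_eq_abs, abs_of_nonneg (by linarith : (0:ℝ) ≤ t - T)] using this
    filter_upwards [eventually_ge_atTop (max T 1), eventually_gt_atTop (2 * |v T| / ε + |T| + 1)] with t ht h6
    have ht1 : (1:ℝ) ≤ t := le_trans (le_max_right _ _) ht
    have htpos : (0:ℝ) < t := by linarith
    have htT : T ≤ t := le_trans (le_max_left _ _) ht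
    have h3 := hbd t htT
    have h4 : |v t| ≤ |v T| + ε/2 * (t - T) := by
      have := abs_sub_abs_le_abs_sub (v t) (v T); linarith
    have h7 : 2 * |v T| ≤ ε * (t - |T| - 1) := by
      have hεt : 2 * |v T| / ε ≤ t - |T| - 1 := by linarith
      rw [div_le_iff₀ hε] at hεt; linarith
    have h8 : |u t / t - K| = |v t| / t := by
      have hvt : u t / t - K = v t / t := by
        field_simp [hv]; ring
      rw [hvt, abs_div, abs_of_pos htpos]
    rw [h8, div_lt_iff₀ htpos]
    nlinarith [abs_nonneg (v T), abs_nonneg T, neg_abs_le T]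
  rw [Metric.tendsto_atTop]
  intro ε hε
  obtain ⟨N, hN⟩ := (key ε hε).exists_forall_of_atTop
  exact ⟨N, fun n hn => by rw [Real.dist_eq]; exact hN n hn⟩


private lemma pair_rel {β L x y : ℝ} (hβ : 0 < β) (hxy : x ≠ y)
    (hx : β * (x^3/3 - x^2/2) = L) (hy : β * (y^3/3 - y^2/2) = L) :
    2*(x^2 + x*y + y^2) = 3*(x+y) := by
  have h1 : β * ((x - y) * (2*(x^2 + x*y + y^2) - 3*(x+y))) = 0 := by ring_nf; nlinarith [hx, hy]
  have h2 : (x - y) * (2*(x^2 + x*y + y^2) - 3*(x+y)) = 0 := by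
    rcases mul_eq_zero.1 h1 with h | h
    · exact absurd h (ne_of_gt hβ)
    · exact h
  rcases mul_eq_zero.1 h2 with h | h
  · exact absurd (sub_eq_zero.1 h) hxy
  · linarith [sub_eq_zero.1 h]

private lemma four_points {β L c1 c2 c3 c4 : ℝ} (hβ : 0 < β)
    (h12 : c1 < c2) (h23 : c2 < c3) (h34 : c3 < c4)
    (e1 : β * (c1^3/3 - c1^2/2) = L) (e2 : β * (c2^3/3 - c2^2/2) = L)
    (e3 : β * (c3^3/3 - c3^2/2) = L) (e4 : β * (c4^3/3 - c4^2/2) = L) : False := by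
  have p12 := pair_rel hβ (ne_of_lt h12) e1 e2
  have p13 := pair_rel hβ (ne_of_lt (lt_trans h12 h23)) e1 e3
  have p14 := pair_rel hβ (ne_of_lt (lt_trans (lt_trans h12 h23) h34)) e1 e4
  -- p12 - p13 : 2(c2-c3)(c1+c2+c3) = 3(c2-c3) ⇒ c1+c2+c3 = 3/2
  have s3 : c1 + c2 + c3 = 3/2 := by
    have h : (c2 - c3) * (2*(c1+c2+c3) - 3) = 0 := by nlinarith [p12, p13]
    rcases mul_eq_zero.1 h with h | h
    · linarith [sub_eq_zero.1 h]
    · linarith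
  have s4 : c1 + c2 + c4 = 3/2 := by
    have h : (c2 - c4) * (2*(c1+c2+c4) - 3) = 0 := by nlinarith [p12, p14]
    rcases mul_eq_zero.1 h with h | h
    · linarith [sub_eq_zero.1 h]
    · linarith
  linarith

set_option maxHeartbeats 2000000 in
/-- for `β > 0`, a solution of `f''' + f f'' + β f'(f'-1) = 0` on
`[0,∞)` with `f(0) ≥ 0` and `f' > 0` on `(0,∞)` has `f'` converging at `+∞`,
the limit being `0` or `1`. -/
theorem stmt18 (β : ℝ) (hβ : 0 < β) (f : ℝ → ℝ) (hf : ContDiff ℝ 3 f)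
    (heq : ∀ t ∈ Ici (0 : ℝ), deriv (deriv (deriv f)) t + f t * deriv (deriv f) t
      + β * deriv f t * (deriv f t - 1) = 0)
    (h0 : 0 ≤ f 0)
    (hpos : ∀ t ∈ Ioi (0 : ℝ), 0 < deriv f t) :
    Tendsto (deriv f) atTop (𝓝 0) ∨ Tendsto (deriv f) atTop (𝓝 1) := by
  -- Notation
  set g := deriv f with hgdef
  set h := deriv g with hhdef
  set j := deriv h with hjdef
  clear_value j
  clear_value h
  clear_value g
  -- Smoothness facts
  have hf3 : ContDiff ℝ (((2:ℕ):WithTop ℕ∞) + 1) f := by exact_mod_cast hf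
  rw [contDiff_succ_iff_deriv] at hf3
  have hfd : Differentiable ℝ f := hf3.1
  have hg2 : ContDiff ℝ (((1:ℕ):WithTop ℕ∞) + 1) g := by rw [hgdef]; exact_mod_cast hf3.2.2
  rw [contDiff_succ_iff_deriv] at hg2
  have hgd : Differentiable ℝ g := hg2.1
  have hh1 : ContDiff ℝ 1 h := by rw [hhdef]; exact_mod_cast hg2.2.2
  have hhd : Differentiable ℝ h := hh1.differentiable one_ne_zero
  have hjc : Continuous j := by rw [hjdef]; exact hh1.continuous_deriv le_rfl
  have hfc : Continuous f := hfd.continuous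
  have hgc : Continuous g := hgd.continuous
  have hhc : Continuous h := hhd.continuous
  have df : ∀ t, HasDerivAt f (g t) t := by
    intro t; rw [hgdef]; exact (hfd t).hasDerivAt
  have dg : ∀ t, HasDerivAt g (h t) t := by
    intro t; rw [hhdef]; exact (hgd t).hasDerivAt
  have dh : ∀ t, HasDerivAt h (j t) t := by
    intro t; rw [hjdef]; exact (hhd t).hasDerivAt
  -- the ODE solved for j
  have hj : ∀ t ∈ Ici (0:ℝ), j t = -(f t * h t + β * g t * (g t - 1)) := by
    intro t ht; have := heq t ht; linarith
  -- g ≥ 0 on [0,∞)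
  have g0 : ∀ t ∈ Ici (0:ℝ), 0 ≤ g t := by
    intro t ht
    rcases eq_or_lt_of_le (mem_Ici.1 ht) with rfl | ht'
    · have htend : Tendsto g (𝓝[>] (0:ℝ)) (𝓝 (g 0)) :=
        (hgc.continuousAt.tendsto).mono_left nhdsWithin_le_nhds
      refine ge_of_tendsto htend ?_
      filter_upwards [self_mem_nhdsWithin] with s hs
      exact (hpos s hs).le
    · exact (hpos t ht').le
  -- f strictly monotone on [0,∞)
  have fmono : StrictMonoOn f (Ici (0:ℝ)) := by
    apply strictMonoOn_of_deriv_pos (convex_Ici 0) hfc.continuousOn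
    intro x hx
    rw [interior_Ici] at hx
    rw [← hgdef]
    exact hpos x hx
  have fmono' : MonotoneOn f (Ici (0:ℝ)) := fmono.monotoneOn
  have f0le : ∀ t ∈ Ici (0:ℝ), 0 ≤ f t := fun t ht => le_trans h0 (fmono' self_mem_Ici ht ht)
  -- Energy
  set E : ℝ → ℝ := fun t => (h t)^2/2 + β*((g t)^3/3 - (g t)^2/2) with hEdef
  clear_value E
  have dE0 : ∀ t, HasDerivAt E (h t * j t + β * ((g t)^2 * h t - g t * h t)) t := by
    intro t
    have d1 : HasDerivAt (fun s => (h s)^2) (2 * h t ^ 1 * j t) t := (dh t).pow 2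
    have d2 : HasDerivAt (fun s => (g s)^3) (3 * g t ^ 2 * h t) t := (dg t).pow 3
    have d3 : HasDerivAt (fun s => (g s)^2) (2 * g t ^ 1 * h t) t := (dg t).pow 2
    have := ((d1.div_const 2).add (((d2.div_const 3).sub (d3.div_const 2)).const_mul β))
    rw [hEdef]
    exact this.congr_deriv (by ring)
  have dE : ∀ t ∈ Ici (0:ℝ), HasDerivAt E (-(f t * (h t)^2)) t := by
    intro t ht
    refine (dE0 t).congr_deriv ?_
    rw [hj t ht]; ring
  have hEd : Differentiable ℝ E := fun t => (dE0 t).differentiableAt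
  have hEc : Continuous E := hEd.continuous
  -- E is antitone on [0,∞)
  have Eanti : AntitoneOn E (Ici (0:ℝ)) := by
    apply antitoneOn_of_deriv_nonpos (convex_Ici 0) hEc.continuousOn hEd.differentiableOn
    intro x hx
    rw [interior_Ici] at hx
    rw [(dE x (mem_Ici.2 (le_of_lt (mem_Ioi.1 hx)))).deriv]
    have := f0le x (mem_Ici.2 (le_of_lt (mem_Ioi.1 hx)))
    nlinarith [sq_nonneg (h x)]
  -- E bounded below by -β/6 on [0,∞)
  have Elb : ∀ t ∈ Ici (0:ℝ), -β/6 ≤ E t := by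
    intro t ht
    have hg0 := g0 t ht
    have : 0 ≤ (g t - 1)^2 * (2 * g t + 1) := by positivity
    simp only [hEdef]
    nlinarith [sq_nonneg (h t)]
  -- limit of E
  set Et : ℝ → ℝ := fun t => E (max t 0) with hEtdef
  have EtAnti : Antitone Et := by
    intro s t hst
    exact Eanti (le_max_right s 0) (le_max_right t 0) (max_le_max hst le_rfl)
  have EtBdd : BddBelow (range Et) := by
    refine ⟨-β/6, ?_⟩
    rintro x ⟨t, rfl⟩
    exact Elb _ (le_max_right t 0)
  set L : ℝ := ⨅ t, Et t with hLdef
  have hEL : Tendsto E atTop (𝓝 L) := by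
    have h1 : Tendsto Et atTop (𝓝 L) := tendsto_atTop_ciInf EtAnti EtBdd
    refine h1.congr' ?_
    filter_upwards [eventually_ge_atTop (0:ℝ)] with t ht
    simp [hEtdef, max_eq_left ht]
  have EgeL : ∀ t ∈ Ici (0:ℝ), L ≤ E t := by
    intro t ht
    have : L ≤ Et t := ciInf_le EtBdd t
    simpa [hEtdef, max_eq_left (mem_Ici.1 ht)] using this
  clear_value Et
  clear_value L
  have EleE0 : ∀ t ∈ Ici (0:ℝ), E t ≤ E 0 := fun t ht => Eanti self_mem_Ici ht ht
  have phile : ∀ t ∈ Ici (0:ℝ), β*((g t)^3/3 - (g t)^2/2) ≤ E 0 := by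
    intro t ht
    have h1 := EleE0 t ht
    have h2 : E t = (h t)^2/2 + β*((g t)^3/3 - (g t)^2/2) := by rw [hEdef]
    nlinarith [sq_nonneg (h t)]
  -- bound on g
  obtain ⟨B, hB1, hgB⟩ : ∃ B, 1 ≤ B ∧ ∀ t ∈ Ici (0:ℝ), g t ≤ B := by
    refine ⟨max 2 (3*(max (E 0) 1)/β), le_trans one_le_two (le_max_left _ _), ?_⟩
    intro t ht
    by_contra hgt
    push_neg at hgt
    have h2 : (2:ℝ) < g t := lt_of_le_of_lt (le_max_left _ _) hgt
    have h3 : 3*(max (E 0) 1)/β < g t := lt_of_le_of_lt (le_max_right _ _) hgt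
    have hC1 : 1 ≤ max (E 0) 1 := le_max_right _ _
    have h4 : 3*(max (E 0) 1) < g t * β := by rwa [div_lt_iff₀ hβ] at h3
    have h5 := phile t ht
    have h6 : E 0 ≤ max (E 0) 1 := le_max_left _ _
    have k0 : (0:ℝ) < g t := by linarith
    have p1 : 3*(max (E 0) 1)*(g t) < β * g t * g t := by nlinarith
    have p2 : β * g t * g t * 1 ≤ β * g t * g t * (2 * g t - 3) := by
      apply mul_le_mul_of_nonneg_left (by linarith) (by positivity)
    have p3 : 0 < (max (E 0) 1) * (g t - 2) :=
      mul_pos (lt_of_lt_of_le zero_lt_one hC1) (by linarith)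
    nlinarith
  -- bound on h
  have hM2n : 0 ≤ 2 * E 0 + β/3 := by
    have h1 := Elb 0 self_mem_Ici
    linarith
  obtain ⟨M, hM0, hhM⟩ : ∃ M, 0 < M ∧ ∀ t ∈ Ici (0:ℝ), (h t)^2 ≤ M^2 ∧ |h t| ≤ M := by
    refine ⟨Real.sqrt (2 * E 0 + β/3) + 1, by positivity, ?_⟩
    intro t ht
    have h1 := EleE0 t ht
    have h2 : -β/6 ≤ β*((g t)^3/3 - (g t)^2/2) := by
      nlinarith [g0 t ht, mul_nonneg (mul_nonneg (sq_nonneg (g t - 1)) (by linarith [g0 t ht] : (0:ℝ) ≤ 2 * g t + 1)) hβ.le]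
    have h3 : E t = (h t)^2/2 + β*((g t)^3/3 - (g t)^2/2) := by rw [hEdef]
    have h4 : E 0 = (h 0)^2/2 + β*((g 0)^3/3 - (g 0)^2/2) := by rw [hEdef]
    have hsq : (h t)^2 ≤ 2 * E 0 + β/3 := by nlinarith
    have hs : (h t)^2 ≤ (Real.sqrt (2 * E 0 + β/3) + 1)^2 := by
      nlinarith [Real.sq_sqrt hM2n, Real.sqrt_nonneg (2 * E 0 + β/3)]
    refine ⟨hs, ?_⟩
    have h5 := Real.sqrt_le_sqrt hs
    rwa [Real.sqrt_sq_eq_abs, Real.sqrt_sq (by positivity)] at h5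
  -- f 1 > 0 and growth bound on f
  have f1pos : 0 < f 1 := lt_of_le_of_lt h0 (fmono self_mem_Ici (by norm_num) one_pos)
  have f1le : ∀ t ∈ Ici (1:ℝ), f 1 ≤ f t := by
    intro t ht
    exact fmono' (by norm_num) (mem_Ici.2 (le_trans zero_le_one (mem_Ici.1 ht))) ht
  have fgrow : ∀ s t : ℝ, 0 ≤ s → s ≤ t → f t ≤ f s + B * (t - s) := by
    intro s t hs hst
    have hbd := Convex.norm_image_sub_le_of_norm_hasDerivWithin_le
      (f' := g) (fun x (_ : x ∈ Ici (0:ℝ)) => (df x).hasDerivWithinAt)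
      (fun x hx => by rw [Real.norm_eq_abs, abs_of_nonneg (g0 x hx)]; exact hgB x hx)
      (convex_Ici 0) (hs : s ∈ Ici 0) (show t ∈ Ici 0 by exact le_trans hs hst)
    rw [Real.norm_eq_abs, Real.norm_eq_abs, abs_of_nonneg (by linarith : (0:ℝ) ≤ t - s)] at hbd
    have := le_abs_self (f t - f s)
    linarith
  -- integral identity
  have int_eq : ∀ a b : ℝ, 0 ≤ a → a ≤ b → ∫ t in a..b, f t * (h t)^2 = E a - E b := by
    intro a b ha hab
    have hd : ∀ x ∈ uIcc a b, HasDerivAt E (-(f x * (h x)^2)) x := by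
      intro x hx
      rw [uIcc_of_le hab] at hx
      exact dE x (le_trans ha hx.1)
    have hi : IntervalIntegrable (fun t => -(f t * (h t)^2)) MeasureTheory.volume a b :=
      Continuous.intervalIntegrable ((hfc.mul (hhc.pow 2)).neg) a b
    have h1 := intervalIntegral.integral_eq_sub_of_hasDerivAt hd hi
    have h2 : ∫ t in a..b, -(f t * (h t)^2) = -∫ t in a..b, f t * (h t)^2 :=
      intervalIntegral.integral_neg
    rw [h2] at h1
    linarith
  -- h tends to 0
  have hto0 : Tendsto h atTop (𝓝 0) := by
    rw [Metric.tendsto_atTop]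
    intro ε hε
    have hD1 : (1:ℝ) ≤ B * M + β * B * (B + 1) + 1 := by
      have : 0 ≤ B * M := by positivity
      have : 0 ≤ β * B * (B+1) := by positivity
      linarith
    obtain ⟨D, hDdef⟩ : ∃ D : ℝ, D = B * M + β * B * (B + 1) + 1 := ⟨_, rfl⟩
    rw [← hDdef] at hD1
    -- bound on j on [t₀, t₀+1]
    have hjb : ∀ t₀, 1 ≤ t₀ → ∀ s ∈ Icc t₀ (t₀+1), |j s| ≤ f t₀ * M + D := by
      intro t₀ ht₀ s hs
      have hs0 : s ∈ Ici (0:ℝ) := by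
        have := hs.1; simp only [mem_Ici]; linarith
      rw [hj s hs0]
      have e1 : |f s * h s| ≤ f s * M := by
        rw [abs_mul, abs_of_nonneg (f0le s hs0)]
        exact mul_le_mul_of_nonneg_left (hhM s hs0).2 (f0le s hs0)
      have e2 : |β * g s * (g s - 1)| ≤ β * B * (B + 1) := by
        rw [abs_mul, abs_mul, abs_of_pos hβ]
        have b1 : |g s| ≤ B := by
          rw [abs_of_nonneg (g0 s hs0)]; exact hgB s hs0
        have b2 : |g s - 1| ≤ B + 1 := by
          rw [abs_le]
          constructor
          · have := g0 s hs0; linarith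
          · have := hgB s hs0; linarith
        have := mul_le_mul b1 b2 (abs_nonneg _) (le_trans zero_le_one hB1)
        nlinarith [abs_nonneg (g s), abs_nonneg (g s - 1), hβ.le]
      have e3 : f s ≤ f t₀ + B := by
        have := fgrow t₀ s (by linarith) hs.1
        have := hs.2
        nlinarith [hB1]
      have e4 : f s * M ≤ (f t₀ + B) * M :=
        mul_le_mul_of_nonneg_right e3 hM0.le
      calc |(-(f s * h s + β * g s * (g s - 1)))| ≤ |f s * h s| + |β * g s * (g s - 1)| := by
              rw [abs_neg]; exact abs_add_le _ _
        _ ≤ f s * M + β * B * (B+1) := by linarith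
        _ ≤ (f t₀ + B) * M + β * B * (B+1) := by linarith
        _ ≤ f t₀ * M + D := by rw [hDdef]; nlinarith
    -- the contribution constant
    have hmpos : 0 < f 1 / (f 1 * M + D) := by positivity
    obtain ⟨c, hcdef⟩ : ∃ c : ℝ, c = (ε/2)^2 * min (f 1) (f 1 / (f 1 * M + D) * (ε/2)) := ⟨_, rfl⟩
    have hcpos : 0 < c := by
      rw [hcdef]
      apply mul_pos (by positivity)
      exact lt_min f1pos (by positivity)
    -- choose T
    obtain ⟨T₀, hT₀⟩ := Metric.tendsto_atTop.1 hEL c hcpos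
    refine ⟨max T₀ 1, ?_⟩
    intro t ht
    have ht1 : (1:ℝ) ≤ t := le_trans (le_max_right _ _) ht
    have ht0 : t ∈ Ici (0:ℝ) := by simp only [mem_Ici]; linarith
    rw [Real.dist_eq, sub_zero]
    by_contra hcon
    push_neg at hcon
    -- persistence interval
    have hApos : (0:ℝ) < f t * M + D := by
      have h1 : 0 ≤ f t * M := mul_nonneg (f0le t ht0) hM0.le
      linarith [hD1]
    obtain ⟨ℓ, hldef⟩ : ∃ l : ℝ, l = min 1 (ε/2 / (f t * M + D)) := ⟨_, rfl⟩
    have hlpos : 0 < ℓ := by rw [hldef]; exact lt_min one_pos (by positivity)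
    have hl1 : ℓ ≤ 1 := by rw [hldef]; exact min_le_left _ _
    have hlA : (f t * M + D) * ℓ ≤ ε/2 := by
      have h1 : ℓ ≤ ε/2 / (f t * M + D) := by rw [hldef]; exact min_le_right _ _
      calc (f t * M + D) * ℓ ≤ (f t * M + D) * (ε/2 / (f t * M + D)) :=
            mul_le_mul_of_nonneg_left h1 hApos.le
        _ = ε/2 := by field_simp
    -- |h| ≥ ε/2 on [t, t+ℓ]
    have hper : ∀ s ∈ Icc t (t + ℓ), ε/2 ≤ |h s| := by
      intro s hs
      have hsub : s ∈ Icc t (t+1) := ⟨hs.1, le_trans hs.2 (by linarith)⟩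
      have hdiff := Convex.norm_image_sub_le_of_norm_hasDerivWithin_le
        (f' := j) (fun x (_ : x ∈ Icc t (t+1)) => (dh x).hasDerivWithinAt)
        (fun x hx => by rw [Real.norm_eq_abs]; exact hjb t ht1 x hx)
        (convex_Icc t (t+1)) (left_mem_Icc.2 (by linarith)) hsub
      rw [Real.norm_eq_abs, Real.norm_eq_abs] at hdiff
      have habs : |s - t| = s - t := abs_of_nonneg (by linarith [hs.1])
      rw [habs] at hdiff
      have hst : s - t ≤ ℓ := by linarith [hs.2]
      have h1 : |h s - h t| ≤ ε/2 := by
        calc |h s - h t| ≤ (f t * M + D) * (s - t) := hdiff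
          _ ≤ (f t * M + D) * ℓ := mul_le_mul_of_nonneg_left hst hApos.le
          _ ≤ ε/2 := hlA
      have := abs_sub_abs_le_abs_sub (h t) (h s)
      rw [abs_sub_comm (h t) (h s)] at this
      linarith
    -- integral lower bound
    have hlow : f t * (ε/2)^2 * ℓ ≤ ∫ s in t..(t+ℓ), f s * (h s)^2 := by
      have hconst : ∫ s in t..(t+ℓ), (f t * (ε/2)^2) = (t + ℓ - t) * (f t * (ε/2)^2) := by
        rw [intervalIntegral.integral_const]; simp [smul_eq_mul]
      have hmono := intervalIntegral.integral_mono_on (by linarith : t ≤ t + ℓ)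
        (intervalIntegrable_const (μ := MeasureTheory.volume) (c := f t * (ε/2)^2))
        (Continuous.intervalIntegrable (hfc.mul (hhc.pow 2)) t (t+ℓ))
        (fun x hx => ?_)
      · calc f t * (ε/2)^2 * ℓ = (t + ℓ - t) * (f t * (ε/2)^2) := by ring
          _ = ∫ s in t..(t+ℓ), (f t * (ε/2)^2) := hconst.symm
          _ ≤ ∫ s in t..(t+ℓ), f s * (h s)^2 := hmono
      · -- pointwise bound
        have hx0 : x ∈ Ici (0:ℝ) := by
          have := hx.1; simp only [mem_Ici]; linarith
        have hfx : f t ≤ f x := fmono' ht0 hx0 hx.1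
        have hhx : (ε/2)^2 ≤ (h x)^2 := by
          have := hper x hx
          nlinarith [abs_nonneg (h x), sq_abs (h x)]
        have hft : 0 ≤ f t := f0le t ht0
        show f t * (ε/2)^2 ≤ f x * (h x)^2
        nlinarith
    -- integral upper bound
    have hhi : ∫ s in t..(t+ℓ), f s * (h s)^2 < c := by
      rw [int_eq t (t+ℓ) (by linarith) (by linarith)]
      have h1 := hT₀ t (le_trans (le_max_left _ _) ht)
      rw [Real.dist_eq] at h1
      have h2 : E t - L < c := by
        have := abs_lt.1 h1
        linarith [this.1, this.2]
      have h3 : L ≤ E (t+ℓ) := EgeL (t+ℓ) (by simp only [mem_Ici]; linarith)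
      linarith
    -- lower bound on f t * ℓ
    have hftl : min (f 1) (f 1 / (f 1 * M + D) * (ε/2)) ≤ f t * ℓ := by
      have hf1t : f 1 ≤ f t := f1le t (by simp only [mem_Ici]; linarith)
      have hD0 : (0:ℝ) < f 1 * M + D := by positivity
      have case1 : f 1 * 1 ≤ f t * 1 := by linarith
      have key : f 1 * (ε/2) / (f 1 * M + D) ≤ f t * (ε/2) / (f t * M + D) := by
        rw [div_le_div_iff₀ hD0 hApos]
        nlinarith [mul_nonneg (mul_nonneg (by linarith : (0:ℝ) ≤ ε/2) (by linarith : (0:ℝ) ≤ D)) (by linarith : (0:ℝ) ≤ f t - f 1)]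
      have case2 : f 1 / (f 1 * M + D) * (ε/2) ≤ f t * (ε/2 / (f t * M + D)) := by
        have e1 : f 1 / (f 1 * M + D) * (ε/2) = f 1 * (ε/2) / (f 1 * M + D) := by ring
        have e2 : f t * (ε/2 / (f t * M + D)) = f t * (ε/2) / (f t * M + D) := by ring
        rw [e1, e2]; exact key
      calc min (f 1) (f 1 / (f 1 * M + D) * (ε/2)) ≤ min (f t * 1) (f t * (ε/2 / (f t * M + D))) :=
            min_le_min (by linarith) case2
        _ = f t * min 1 (ε/2 / (f t * M + D)) := (mul_min_of_nonneg _ _ (f0le t ht0)).symm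
        _ = f t * ℓ := by rw [hldef]
    -- contradiction
    have : c ≤ f t * (ε/2)^2 * ℓ := by
      rw [hcdef]
      nlinarith [hftl]
    linarith
  -- φ ∘ g tends to L
  have hphiL : Tendsto (fun t => β*((g t)^3/3 - (g t)^2/2)) atTop (𝓝 L) := by
    have h1 : Tendsto (fun t => (h t)^2/2) atTop (𝓝 0) := by
      have := (hto0.pow 2).div_const 2
      simpa using this
    have h2 : Tendsto (fun t => E t - (h t)^2/2) atTop (𝓝 (L - 0)) := hEL.sub h1
    rw [sub_zero] at h2
    refine h2.congr (fun t => ?_)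
    rw [hEdef]; ring
  -- liminf / limsup of g
  have hbdd_le : IsBoundedUnder (· ≤ ·) atTop g := by
    refine ⟨B, eventually_map.2 ?_⟩
    filter_upwards [eventually_ge_atTop (0:ℝ)] with t ht
    exact hgB t ht
  have hbdd_ge : IsBoundedUnder (· ≥ ·) atTop g := by
    refine ⟨0, eventually_map.2 ?_⟩
    filter_upwards [eventually_ge_atTop (0:ℝ)] with t ht
    exact g0 t ht
  have hale : liminf g atTop ≤ limsup g atTop := liminf_le_limsup hbdd_le hbdd_ge
  -- g converges
  obtain ⟨cc, hcc⟩ : ∃ cc, Tendsto g atTop (𝓝 cc) := by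
    rcases eq_or_lt_of_le hale with heq' | hlt
    · exact ⟨liminf g atTop, tendsto_of_liminf_eq_limsup rfl heq'.symm hbdd_le hbdd_ge⟩
    · exfalso
      -- crossing values
      have crossing : ∀ x, liminf g atTop < x → x < limsup g atTop → ∀ T, ∃ u, T ≤ u ∧ g u = x := by
        intro x h1 h2 T
        have hfreq1 : ∃ᶠ t in atTop, g t < x := frequently_lt_of_liminf_lt hbdd_le.isCoboundedUnder_ge h1
        have hfreq2 : ∃ᶠ t in atTop, x < g t := frequently_lt_of_lt_limsup hbdd_ge.isCoboundedUnder_le h2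
        obtain ⟨s, hs1, hs2⟩ := (hfreq1.and_eventually (eventually_ge_atTop T)).exists
        obtain ⟨u2, hu1, hu2⟩ := (hfreq2.and_eventually (eventually_ge_atTop s)).exists
        have hx : x ∈ Icc (g s) (g u2) := ⟨le_of_lt hs1, le_of_lt hu1⟩
        obtain ⟨u, hu_mem, hu_eq⟩ := intermediate_value_Icc hu2 hgc.continuousOn hx
        exact ⟨u, le_trans hs2 hu_mem.1, hu_eq⟩
      have philim : ∀ x, liminf g atTop < x → x < limsup g atTop → β*(x^3/3 - x^2/2) = L := by
        intro x h1 h2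
        by_contra hne
        have hpos' : 0 < |β*(x^3/3 - x^2/2) - L| := abs_pos.2 (sub_ne_zero.2 hne)
        obtain ⟨T, hT⟩ := Metric.tendsto_atTop.1 hphiL _ hpos'
        obtain ⟨u, huT, hue⟩ := crossing x h1 h2 T
        have := hT u huT
        rw [hue, Real.dist_eq] at this
        exact lt_irrefl _ this
      set la := liminf g atTop
      set lb := limsup g atTop
      have d0 : 0 < lb - la := by simp only [sub_pos]; exact hlt
      have e1 := philim (la + (lb-la)/5) (by linarith) (by linarith)
      have e2 := philim (la + 2*(lb-la)/5) (by linarith) (by linarith)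
      have e3 := philim (la + 3*(lb-la)/5) (by linarith) (by linarith)
      have e4 := philim (la + 4*(lb-la)/5) (by linarith) (by linarith)
      exact four_points hβ (by linarith) (by linarith) (by linarith) e1 e2 e3 e4
  -- cc ≥ 0 not needed; final Cesàro argument
  obtain ⟨cval, hcval⟩ : ∃ v, v = cc^2 - β*cc*(cc-1) := ⟨_, rfl⟩
  have hu' : Tendsto (fun t => j t + (g t)^2 + f t * h t) atTop (𝓝 cval) := by
    have h2 : Tendsto (fun t => (g t)^2 - β * g t * (g t - 1)) atTop (𝓝 cval) := by
      rw [hcval]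
      exact (hcc.pow 2).sub (((tendsto_const_nhds (x := β)).mul hcc).mul (hcc.sub (tendsto_const_nhds (x := (1:ℝ)))))
    refine h2.congr' ?_
    filter_upwards [eventually_ge_atTop (0:ℝ)] with t ht
    rw [hj t ht]; ring
  have hG : Tendsto (fun t => (h t + f t * g t) / t) atTop (𝓝 cval) := by
    apply lin_growth (u' := fun t => j t + (g t)^2 + f t * h t) ?_ hu'
    intro t
    have := (dh t).add ((df t).mul (dg t))
    exact this.congr_deriv (by ring)
  have hf_t : Tendsto (fun t => f t / t) atTop (𝓝 cc) := lin_growth df hcc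
  have hother : Tendsto (fun t => h t / t + f t / t * g t) atTop (𝓝 (0 + cc * cc)) :=
    (hto0.div_atTop tendsto_id).add (hf_t.mul hcc)
  have hG2 : Tendsto (fun t => h t / t + f t / t * g t) atTop (𝓝 cval) := by
    refine hG.congr' ?_
    filter_upwards [eventually_ge_atTop (1:ℝ)] with t ht
    have htne : t ≠ 0 := by linarith
    field_simp
  have huniq : cval = 0 + cc * cc := tendsto_nhds_unique hG2 hother
  have hzero : β * cc * (cc - 1) = 0 := by
    rw [hcval] at huniq; nlinarith [huniq]
  rcases mul_eq_zero.1 hzero with hz | hz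
  · rcases mul_eq_zero.1 hz with hz' | hz'
    · exact absurd hz' (ne_of_gt hβ)
    · left; rw [hz'] at hcc; exact hcc
  · right
    have : cc = 1 := by linarith [sub_eq_zero.1 hz]
    rw [this] at hcc; exact hcc
end

section
/- Let β ∈ (1,2], a > 0, b > 0 and let c be a real number with 2·a·c ≥ b² − (2b − β)·a². Then any solution f of the equation f''' + f·f'' + β·f'·(f'−1) = 0 on an interval [0, T) (with T ≤ +∞) satisfying f(0) = a, f'(0) = b and f''(0) = c has f' > 0 on [0, T). Moreover, if T = +∞, then f'(t) → 1 as t → +∞. -/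
open Set Filter Topology



lemma monoOn_of_hasDerivAt (h h' : ℝ → ℝ) (s : Set ℝ) (hs : Convex ℝ s)
    (hd : ∀ t ∈ s, HasDerivAt h (h' t) t) (hp : ∀ t ∈ s, 0 ≤ h' t) :
    MonotoneOn h s := by
  apply monotoneOn_of_deriv_nonneg hs
  · exact fun x hx => (hd x hx).continuousAt.continuousWithinAt
  · exact fun x hx => ((hd x (interior_subset hx)).differentiableAt).differentiableWithinAt
  · intro x hx
    rw [(hd x (interior_subset hx)).deriv]
    exact hp x (interior_subset hx)

lemma antiOn_of_hasDerivAt (h h' : ℝ → ℝ) (s : Set ℝ) (hs : Convex ℝ s)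
    (hd : ∀ t ∈ s, HasDerivAt h (h' t) t) (hp : ∀ t ∈ s, h' t ≤ 0) :
    AntitoneOn h s := by
  apply antitoneOn_of_deriv_nonpos hs
  · exact fun x hx => (hd x hx).continuousAt.continuousWithinAt
  · exact fun x hx => ((hd x (interior_subset hx)).differentiableAt).differentiableWithinAt
  · intro x hx
    rw [(hd x (interior_subset hx)).deriv]
    exact hp x (interior_subset hx)

lemma decrement (h h' : ℝ → ℝ) (p q c : ℝ) (hpq : p ≤ q)
    (hd : ∀ t ∈ Icc p q, HasDerivAt h (h' t) t)
    (hb : ∀ t ∈ Icc p q, h' t ≤ -c) :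
    h q ≤ h p - c * (q - p) := by
  have key : AntitoneOn (fun t => h t + c * t) (Icc p q) := by
    apply antiOn_of_hasDerivAt _ (fun t => h' t + c)
    · exact convex_Icc p q
    · intro t ht
      have : HasDerivAt (fun y => c * y) (c * 1) t := (hasDerivAt_id t).const_mul c
      exact ((hd t ht).add this).congr_deriv (by ring)
    · intro t ht; have := hb t ht; linarith
  have := key (left_mem_Icc.2 hpq) (right_mem_Icc.2 hpq) hpq
  simp only at this
  linarith

lemma avg_of_deriv (h h' : ℝ → ℝ) (L : ℝ)
    (hd : ∀ t, 0 ≤ t → HasDerivAt h (h' t) t)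
    (hl : Tendsto h' atTop (𝓝 L)) :
    Tendsto (fun t => h t / t) atTop (𝓝 L) := by
  rw [Metric.tendsto_atTop] at hl ⊢
  intro ε hε
  obtain ⟨t₀', ht₀'⟩ := hl (ε/2) (by linarith)
  set t₀ := max t₀' 0 with ht₀def
  have ht₀0 : 0 ≤ t₀ := le_max_right _ _
  set C := |h t₀ - L * t₀| with hCdef
  have key : ∀ t, t₀ ≤ t → |h t - L * t - (h t₀ - L * t₀)| ≤ ε/2 * (t - t₀) := by
    intro t ht
    have hsub : ∀ x ∈ Icc t₀ t, HasDerivAt (fun s => h s - L * s) (h' x - L) x := by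
      intro x hx
      have hx0 : 0 ≤ x := le_trans ht₀0 hx.1
      have h2 : HasDerivAt (fun y : ℝ => L * y) (L * 1) x := (hasDerivAt_id x).const_mul L
      exact ((hd x hx0).sub h2).congr_deriv (by ring)
    have := Convex.norm_image_sub_le_of_norm_deriv_le (f := fun s => h s - L * s)
      (s := Icc t₀ t) (C := ε/2)
      (fun x hx => (hsub x hx).differentiableAt)
      (fun x hx => by
        rw [(hsub x hx).deriv]
        have := ht₀' x (le_trans (le_max_left _ _) hx.1)
        rw [Real.dist_eq] at this
        simpa [Real.norm_eq_abs] using (le_of_lt this))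
      (convex_Icc t₀ t) (left_mem_Icc.2 ht) (right_mem_Icc.2 ht)
    rw [Real.norm_eq_abs, Real.norm_eq_abs, abs_of_nonneg (by linarith : (0:ℝ) ≤ t - t₀)] at this
    linarith [this]
  refine ⟨max (t₀ + 1) (2 * C / ε + 1), fun t ht => ?_⟩
  have ht1 : t₀ + 1 ≤ t := le_trans (le_max_left _ _) ht
  have ht2 : 2 * C / ε + 1 ≤ t := le_trans (le_max_right _ _) ht
  have htpos : 0 < t := by linarith
  have hCn : 0 ≤ C := abs_nonneg _
  have hkey := key t (by linarith)
  rw [Real.dist_eq]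
  have heq1 : h t / t - L = (h t - L * t) / t := by field_simp
  rw [heq1, abs_div, abs_of_pos htpos]
  have hnum : |h t - L * t| ≤ C + ε/2 * (t - t₀) := by
    calc |h t - L * t| ≤ |h t - L * t - (h t₀ - L * t₀)| + |h t₀ - L * t₀| := by
          have := abs_add_le (h t - L * t - (h t₀ - L * t₀)) (h t₀ - L * t₀)
          simpa using this
      _ ≤ ε/2 * (t - t₀) + C := by exact add_le_add hkey (le_refl _)
      _ = C + ε/2 * (t - t₀) := by ring
  have hC : C / t < ε / 2 := by
    rw [div_lt_iff₀ htpos]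
    have : 2 * C / ε < t := by linarith
    rw [div_lt_iff₀ hε] at this
    linarith
  calc |h t - L * t| / t ≤ (C + ε/2 * (t - t₀)) / t := by
        gcongr
    _ = C / t + ε/2 * (t - t₀) / t := by ring
    _ ≤ C / t + ε/2 := by
        have : ε/2 * (t - t₀) / t ≤ ε/2 := by
          rw [div_le_iff₀ htpos]
          nlinarith
        linarith
    _ < ε := by linarith

lemma phi_min (β x : ℝ) (hβ : 0 < β) (hx : 0 ≤ x) :
    -(β/3) ≤ 2*β/3*x^3 - β*x^2 := by
  nlinarith [mul_nonneg (mul_nonneg hβ.le (sq_nonneg (x-1))) (by linarith : (0:ℝ) ≤ 2*x+1)]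

lemma phi_hasDeriv (β x : ℝ) :
    HasDerivAt (fun y => 2*β/3*y^3 - β*y^2) (2*β*x^2 - 2*β*x) x := by
  have h1 : HasDerivAt (fun y : ℝ => y^3) (3*x^2) x := by simpa using hasDerivAt_pow 3 x
  have h2 : HasDerivAt (fun y : ℝ => y^2) (2*x) x := by simpa using hasDerivAt_pow 2 x
  have := (h1.const_mul (2*β/3)).sub (h2.const_mul β)
  exact this.congr_deriv (by ring)

lemma phi_unimodal (β p x q : ℝ) (hβ : 0 < β) (hp : 0 ≤ p) (hpx : p < x) (hxq : x < q) :
    2*β/3*x^3 - β*x^2 < max (2*β/3*p^3 - β*p^2) (2*β/3*q^3 - β*q^2) := by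
  rcases le_or_gt x 1 with hx1 | hx1
  · have hanti : StrictAntiOn (fun y => 2*β/3*y^3 - β*y^2) (Icc 0 1) := by
      apply strictAntiOn_of_deriv_neg (convex_Icc 0 1)
      · exact Continuous.continuousOn (by continuity)
      · intro y hy
        rw [interior_Icc] at hy
        obtain ⟨hy1, hy2⟩ := mem_Ioo.mp hy
        rw [(phi_hasDeriv β y).deriv]
        nlinarith [mul_pos (mul_pos hβ hy1) (show (0:ℝ) < 1 - y by linarith)]
    have : (2*β/3*x^3 - β*x^2) < (2*β/3*p^3 - β*p^2) := by
      have := hanti ⟨hp, by linarith⟩ ⟨by linarith, hx1⟩ hpx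
      simpa using this
    exact lt_max_of_lt_left this
  · have hmono : StrictMonoOn (fun y => 2*β/3*y^3 - β*y^2) (Ici 1) := by
      apply strictMonoOn_of_deriv_pos (convex_Ici 1)
      · exact Continuous.continuousOn (by continuity)
      · intro y hy
        rw [interior_Ici] at hy
        rw [(phi_hasDeriv β y).deriv]
        nlinarith [mul_pos (mul_pos hβ (show (0:ℝ) < y by linarith [mem_Ioi.mp hy])) (show (0:ℝ) < y - 1 by linarith [mem_Ioi.mp hy])]
    have : (2*β/3*x^3 - β*x^2) < (2*β/3*q^3 - β*q^2) := by
      have := hmono (le_of_lt hx1) (mem_Ici.mpr (by linarith)) hxq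
      simpa using this
    exact lt_max_of_lt_right this

lemma E_hasDeriv (β : ℝ) (f f1 f2 f3 : ℝ → ℝ) (u : ℝ)
    (h1 : HasDerivAt f (f1 u) u) (h2 : HasDerivAt f1 (f2 u) u)
    (h3 : HasDerivAt f2 (f3 u) u)
    (e : f3 u + f u * f2 u + β * f1 u * (f1 u - 1) = 0) :
    HasDerivAt (fun y => f2 y ^ 2 + 2*β/3 * f1 y ^ 3 - β * f1 y ^ 2)
      (-2 * f u * f2 u ^ 2) u := by
  have raw := ((h3.pow 2).add ((h2.pow 3).const_mul (2*β/3))).sub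
    ((h2.pow 2).const_mul β)
  exact raw.congr_deriv (by symm; push_cast; linear_combination (-2 * f2 u) * e)

lemma G_hasDeriv (β : ℝ) (f f1 f2 f3 : ℝ → ℝ) (u : ℝ)
    (h1 : HasDerivAt f (f1 u) u) (h2 : HasDerivAt f1 (f2 u) u)
    (h3 : HasDerivAt f2 (f3 u) u)
    (e : f3 u + f u * f2 u + β * f1 u * (f1 u - 1) = 0) :
    HasDerivAt (fun y => 2*(f y * f2 y) - f1 y ^ 2 + 2*(f y ^ 2 * f1 y) - β * f y ^ 2)
      (2*(2-β)*(f u)*(f1 u)^2) u := by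
  have raw := ((((h1.mul h3).const_mul 2).sub (h2.pow 2)).add
    (((h1.pow 2).mul h2).const_mul 2)).sub ((h1.pow 2).const_mul β)
  exact raw.congr_deriv (by symm; simp only [Pi.pow_apply]; push_cast; linear_combination (-2 * f u) * e)

lemma g_hasDeriv (β : ℝ) (f f1 f2 f3 : ℝ → ℝ) (u : ℝ)
    (h1 : HasDerivAt f (f1 u) u) (h2 : HasDerivAt f1 (f2 u) u)
    (h3 : HasDerivAt f2 (f3 u) u)
    (e : f3 u + f u * f2 u + β * f1 u * (f1 u - 1) = 0) :
    HasDerivAt (fun y => f2 y + f y * f1 y) (β * f1 u + (1-β)*(f1 u)^2) u := by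
  have raw := h3.add (h1.mul h2)
  exact raw.congr_deriv (by symm; linear_combination (-1 : ℝ) * e)

lemma smooth_unpack (f : ℝ → ℝ) (hf : ContDiff ℝ 3 f) :
    (∀ t, HasDerivAt f (deriv f t) t) ∧
    (∀ t, HasDerivAt (deriv f) (deriv (deriv f) t) t) ∧
    (∀ t, HasDerivAt (deriv (deriv f)) (deriv (deriv (deriv f)) t) t) := by
  have h3 : ContDiff ℝ (2+1) f := by norm_num at hf ⊢; exact hf
  have h2 : ContDiff ℝ (1+1) (deriv f) := by
    have := (contDiff_succ_iff_deriv.mp h3).2.2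
    norm_num at this ⊢; exact this
  have h1 : ContDiff ℝ (0+1) (deriv (deriv f)) := by
    have := (contDiff_succ_iff_deriv.mp h2).2.2
    norm_num at this ⊢; exact this
  refine ⟨fun t => ?_, fun t => ?_, fun t => ?_⟩
  · exact ((contDiff_succ_iff_deriv.mp h3).1 t).hasDerivAt
  · exact ((contDiff_succ_iff_deriv.mp h2).1 t).hasDerivAt
  · exact ((contDiff_succ_iff_deriv.mp h1).1 t).hasDerivAt
lemma part1 (β a b c : ℝ) (hβ1 : 1 < β) (hβ2 : β ≤ 2) (ha : 0 < a) (hb : 0 < b)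
    (hc : b ^ 2 - (2 * b - β) * a ^ 2 ≤ 2 * a * c)
    (f : ℝ → ℝ)
    (hd1 : ∀ t, HasDerivAt f (deriv f t) t)
    (hd2 : ∀ t, HasDerivAt (deriv f) (deriv (deriv f) t) t)
    (hd3 : ∀ t, HasDerivAt (deriv (deriv f)) (deriv (deriv (deriv f)) t) t)
    (h0 : f 0 = a) (h0' : deriv f 0 = b) (h0'' : deriv (deriv f) 0 = c)
    (t : ℝ) (ht : 0 ≤ t)
    (heq : ∀ u, 0 ≤ u → u ≤ t →
      deriv (deriv (deriv f)) u + f u * deriv (deriv f) u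
        + β * deriv f u * (deriv f u - 1) = 0) :
    ∀ u, 0 ≤ u → u ≤ t → 0 < deriv f u := by
  by_contra hcon
  push_neg at hcon
  obtain ⟨u₀, hu₀0, hu₀t, hu₀⟩ := hcon
  set f1 := deriv f with hf1
  set f2 := deriv (deriv f) with hf2
  set f3 := deriv (deriv (deriv f)) with hf3
  have hf1cont : Continuous f1 := by
    rw [continuous_iff_continuousAt]; exact fun x => (hd2 x).continuousAt
  set S : Set ℝ := Icc 0 t ∩ {u | f1 u ≤ 0} with hS
  have hSne : S.Nonempty := ⟨u₀, ⟨hu₀0, hu₀t⟩, hu₀⟩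
  have hSclosed : IsClosed S := isClosed_Icc.inter (isClosed_le hf1cont continuous_const)
  have hSbdd : BddBelow S := ⟨0, fun x hx => hx.1.1⟩
  set s := sInf S with hs
  have hsS : s ∈ S := hSclosed.csInf_mem hSne hSbdd
  have hs0 : 0 ≤ s := hsS.1.1
  have hst : s ≤ t := hsS.1.2
  have hf1sle : f1 s ≤ 0 := hsS.2
  have hspos : 0 < s := by
    rcases eq_or_lt_of_le hs0 with h | h
    · exfalso; rw [← h] at hf1sle; rw [h0'] at hf1sle; linarith
    · exact h
  have hpos : ∀ u, 0 ≤ u → u < s → 0 < f1 u := by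
    intro u hu0 hus
    by_contra hneg
    push_neg at hneg
    have humem : u ∈ S := ⟨⟨hu0, le_trans hus.le hst⟩, hneg⟩
    have := csInf_le hSbdd humem
    rw [← hs] at this
    linarith
  have hf1s0 : f1 s = 0 := by
    refine le_antisymm hf1sle ?_
    have hcl : s ∈ closure (Ico 0 s) := by
      rw [closure_Ico (ne_of_lt hspos)]
      exact ⟨hs0, le_refl s⟩
    have hsub : Ico 0 s ⊆ {x | 0 ≤ f1 x} := fun u hu => (hpos u hu.1 hu.2).le
    exact closure_minimal hsub (isClosed_le continuous_const hf1cont) hcl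
  have hf1nonneg : ∀ u ∈ Icc 0 s, 0 ≤ f1 u := by
    intro u hu
    rcases eq_or_lt_of_le hu.2 with h | h
    · rw [h, hf1s0]
    · exact (hpos u hu.1 h).le
  have hfmono : MonotoneOn f (Icc 0 s) := by
    apply monoOn_of_hasDerivAt f f1 _ (convex_Icc 0 s) (fun u _ => hd1 u) hf1nonneg
  have hfa : ∀ u ∈ Icc 0 s, a ≤ f u := by
    intro u hu
    have := hfmono (left_mem_Icc.2 hs0) hu hu.1
    rw [h0] at this
    exact this
  set G : ℝ → ℝ := fun y => 2*(f y * f2 y) - f1 y ^ 2 + 2*(f y ^ 2 * f1 y) - β * f y ^ 2 with hG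
  have hG' : ∀ u ∈ Icc 0 s, HasDerivAt G (2*(2-β)*(f u)*(f1 u)^2) u := by
    intro u hu
    have e := heq u hu.1 (le_trans hu.2 hst)
    have raw := (((((hd1 u).mul (hd3 u)).const_mul 2).sub ((hd2 u).pow 2)).add
      ((((hd1 u).pow 2).mul (hd2 u)).const_mul 2)).sub (((hd1 u).pow 2).const_mul β)
    exact raw.congr_deriv (by symm; simp only [Pi.pow_apply]; push_cast; linear_combination (-2 * f u) * e)
  have hGmono : MonotoneOn G (Icc 0 s) := by
    apply monoOn_of_hasDerivAt G _ _ (convex_Icc 0 s) hG'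
    intro u hu
    have h1 : a ≤ f u := hfa u hu
    have h2 : (0:ℝ) ≤ (f1 u)^2 := sq_nonneg _
    have : (0:ℝ) ≤ 2*(2-β)*f u := by nlinarith
    exact mul_nonneg this h2
  have hG0 : 0 ≤ G 0 := by
    simp only [hG, h0, h0', h0'']
    nlinarith
  have hGs : G 0 ≤ G s := hGmono (left_mem_Icc.2 hs0) (right_mem_Icc.2 hs0) hs0
  have hfs : a ≤ f s := hfa s (right_mem_Icc.2 hs0)
  have hf2s : 0 < f2 s := by
    have hGsval : G s = 2*(f s * f2 s) - β * f s ^ 2 := by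
      simp only [hG, hf1s0]; ring
    nlinarith [mul_pos (lt_of_lt_of_le ha hfs) (lt_of_lt_of_le ha hfs)]
  -- slope argument
  have hslope : Tendsto (slope f1 s) (𝓝[≠] s) (𝓝 (f2 s)) :=
    hasDerivAt_iff_tendsto_slope.mp (hd2 s)
  have hslope' : Tendsto (slope f1 s) (𝓝[<] s) (𝓝 (f2 s)) :=
    hslope.mono_left (nhdsWithin_mono s (fun x hx => ne_of_lt hx))
  have hev : ∀ᶠ u in 𝓝[<] s, 0 < slope f1 s u := hslope'.eventually (eventually_gt_nhds hf2s)
  have hmem : Ioo 0 s ∈ 𝓝[<] s := Ioo_mem_nhdsLT_of_mem ⟨hspos, le_refl s⟩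
  obtain ⟨u, hu1, hu2⟩ := (hev.and (eventually_of_mem hmem (fun x hx => hx))).exists
  have hval : slope f1 s u = f1 u / (u - s) := by
    rw [slope_def_field]
    rw [hf1s0]
    ring_nf
  rw [hval] at hu1
  have hults : u - s < 0 := by linarith [hu2.2]
  have hf1u : f1 u < 0 := by
    by_contra hge
    push_neg at hge
    have : f1 u / (u - s) ≤ 0 := div_nonpos_of_nonneg_of_nonpos hge hults.le
    linarith
  exact absurd (hpos u hu2.1.le hu2.2) (not_lt.mpr hf1u.le)

set_option maxHeartbeats 1000000 in
lemma part2 (β a : ℝ) (hβ1 : 1 < β) (hβ2 : β ≤ 2) (ha : 0 < a)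
    (f : ℝ → ℝ)
    (hd1 : ∀ t, HasDerivAt f (deriv f t) t)
    (hd2 : ∀ t, HasDerivAt (deriv f) (deriv (deriv f) t) t)
    (hd3 : ∀ t, HasDerivAt (deriv (deriv f)) (deriv (deriv (deriv f)) t) t)
    (heq : ∀ t, 0 ≤ t →
      deriv (deriv (deriv f)) t + f t * deriv (deriv f) t
        + β * deriv f t * (deriv f t - 1) = 0)
    (hpos : ∀ t, 0 ≤ t → 0 < deriv f t)
    (hfa0 : f 0 = a)
    (hG0 : 0 ≤ 2*(a * deriv (deriv f) 0) - (deriv f 0)^2 + 2*(a^2 * deriv f 0) - β*a^2) :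
    Tendsto (deriv f) atTop (𝓝 1) := by
  have hβ0 : (0:ℝ) < β := by linarith
  set f1 := deriv f with hf1
  set f2 := deriv (deriv f) with hf2
  set f3 := deriv (deriv (deriv f)) with hf3
  have hf1c : Continuous f1 := by
    rw [continuous_iff_continuousAt]; exact fun x => (hd2 x).continuousAt
  have hf2c : Continuous f2 := by
    rw [continuous_iff_continuousAt]; exact fun x => (hd3 x).continuousAt
  -- f ≥ a on [0,∞)
  have hfmono : MonotoneOn f (Ici 0) :=
    monoOn_of_hasDerivAt f f1 _ (convex_Ici 0) (fun u _ => hd1 u)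
      (fun u hu => (hpos u hu).le)
  have hfa : ∀ t, 0 ≤ t → a ≤ f t := by
    intro t ht
    have := hfmono (self_mem_Ici) ht ht
    rwa [hfa0] at this
  -- energy function
  obtain ⟨E, hEeq⟩ : ∃ E : ℝ → ℝ, ∀ y, E y = f2 y ^ 2 + 2*β/3 * f1 y ^ 3 - β * f1 y ^ 2 :=
    ⟨_, fun _ => rfl⟩
  have hEfun : E = fun y => f2 y ^ 2 + 2*β/3 * f1 y ^ 3 - β * f1 y ^ 2 := funext hEeq
  have hE' : ∀ t, 0 ≤ t → HasDerivAt E (-2 * f t * f2 t ^ 2) t := by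
    intro t ht
    rw [hEfun]
    exact E_hasDeriv β f f1 f2 f3 t (hd1 t) (hd2 t) (hd3 t) (heq t ht)
  have hEanti : AntitoneOn E (Ici 0) := by
    apply antiOn_of_hasDerivAt E _ _ (convex_Ici 0) hE'
    intro t ht
    have h1 : a ≤ f t := hfa t ht
    nlinarith [sq_nonneg (f2 t)]
  have hphi_lbE : ∀ t, 0 ≤ t → -(β/3) ≤ E t := by
    intro t ht
    have := phi_min β (f1 t) hβ0 (hpos t ht).le
    have h2 := sq_nonneg (f2 t)
    rw [hEeq t]
    linarith
  -- limit of E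
  set Eg : ℝ → ℝ := fun t => E (max t 0) with hEg
  have hEg_anti : Antitone Eg := by
    intro x y hxy
    exact hEanti (le_max_right x 0) (le_max_right y 0) (max_le_max hxy (le_refl 0))
  have hEg_bdd : BddBelow (range Eg) := by
    refine ⟨-(β/3), fun z hz => ?_⟩
    obtain ⟨t, rfl⟩ := hz
    exact hphi_lbE _ (le_max_right t 0)
  set Einf : ℝ := ⨅ t, Eg t with hEinf
  have hEtendg : Tendsto Eg atTop (𝓝 Einf) := tendsto_atTop_ciInf hEg_anti hEg_bdd
  have hEtend : Tendsto E atTop (𝓝 Einf) := by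
    apply hEtendg.congr'
    filter_upwards [eventually_ge_atTop (0:ℝ)] with t ht
    simp only [hEg, max_eq_left ht]
  have hEinfle : ∀ t, 0 ≤ t → Einf ≤ E t := by
    intro t ht
    have := ciInf_le hEg_bdd t
    rwa [show Eg t = E t by simp only [hEg, max_eq_left ht]] at this
  have hEinf_lb : -(β/3) ≤ Einf := le_ciInf (fun t => hphi_lbE _ (le_max_right t 0))
  -- bound on f1
  have hEle0 : ∀ t, 0 ≤ t → E t ≤ E 0 := fun t ht => hEanti self_mem_Ici ht ht
  set M : ℝ := max 2 (3*|E 0|+3) with hM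
  have hM2 : (2:ℝ) ≤ M := le_max_left _ _
  have hMbd : ∀ t, 0 ≤ t → f1 t ≤ M := by
    intro t ht
    by_contra hgt
    push_neg at hgt
    have hx2 : (2:ℝ) ≤ f1 t := le_trans hM2 hgt.le
    have hxA : 3*|E 0|+3 ≤ f1 t := le_trans (le_max_right _ _) hgt.le
    have hφle : 2*β/3 * f1 t ^ 3 - β * f1 t ^ 2 ≤ E 0 := by
      have h2 := sq_nonneg (f2 t)
      have h3 := hEle0 t ht
      rw [hEeq t] at h3
      linarith
    have hA : (0:ℝ) ≤ |E 0| := abs_nonneg _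
    have hE0le : E 0 ≤ |E 0| := le_abs_self _
    set x := f1 t with hx
    have hxpos : (0:ℝ) < x := hpos t ht
    have s1 : x^2*1 ≤ x^2*(2*x-3) := by nlinarith [mul_nonneg (sq_nonneg x) (show (0:ℝ) ≤ x - 2 by linarith)]
    have s2 : 1*(x^2*(2*x-3)) ≤ β*(x^2*(2*x-3)) := by
      apply mul_le_mul_of_nonneg_right (by linarith) (by nlinarith)
    have s3 : x*(3*|E 0|+3) ≤ x*x := by
      apply mul_le_mul_of_nonneg_left (by linarith) (by linarith)
    nlinarith
  -- bound on f2
  set K : ℝ := Real.sqrt (E 0 + β/3) with hKdef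
  have hKnn : 0 ≤ K := Real.sqrt_nonneg _
  have hK : ∀ t, 0 ≤ t → |f2 t| ≤ K := by
    intro t ht
    have h1 : f2 t ^ 2 ≤ E 0 + β/3 := by
      have hm := phi_min β (f1 t) hβ0 (hpos t ht).le
      have h3 := hEle0 t ht
      rw [hEeq t] at h3
      linarith
    calc |f2 t| = Real.sqrt (f2 t ^ 2) := (Real.sqrt_sq_eq_abs _).symm
      _ ≤ K := Real.sqrt_le_sqrt h1
  -- boundedness for liminf/limsup machinery
  have hBdd_le : IsBoundedUnder (· ≤ ·) atTop f1 :=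
    ⟨M, by rw [Filter.eventually_map]; filter_upwards [eventually_ge_atTop (0:ℝ)] with t ht; exact hMbd t ht⟩
  have hBdd_ge : IsBoundedUnder (· ≥ ·) atTop f1 :=
    ⟨0, by rw [Filter.eventually_map]; filter_upwards [eventually_ge_atTop (0:ℝ)] with t ht; exact (hpos t ht).le⟩
  have hCob_le : IsCoboundedUnder (· ≤ ·) atTop f1 := hBdd_ge.isCoboundedUnder_le
  have hCob_ge : IsCoboundedUnder (· ≥ ·) atTop f1 := hBdd_le.isCoboundedUnder_ge
  set lm : ℝ := liminf f1 atTop with hlm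
  set lp : ℝ := limsup f1 atTop with hlp
  have h0lm : 0 ≤ lm := le_liminf_of_le hCob_ge
    (by filter_upwards [eventually_ge_atTop (0:ℝ)] with t ht; exact (hpos t ht).le)
  have hlmlp : lm ≤ lp := liminf_le_limsup hBdd_le hBdd_ge
  -- key: cluster values of f1 give lower bounds on Einf
  have key : ∀ l : ℝ, (∀ δ : ℝ, 0 < δ → ∃ᶠ t in atTop, |f1 t - l| < δ) →
      2*β/3*l^3 - β*l^2 ≤ Einf := by
    intro l hfreq
    apply le_of_forall_pos_le_add
    intro ε hε
    have hcont : ContinuousAt (fun x : ℝ => 2*β/3*x^3 - β*x^2) l := by fun_prop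
    rw [Metric.continuousAt_iff] at hcont
    obtain ⟨δ, hδ, hδ'⟩ := hcont ε hε
    have hstep : ∀ s, 0 ≤ s → 2*β/3*l^3 - β*l^2 - ε ≤ E s := by
      intro s hs
      obtain ⟨t, htδ, hts⟩ := ((hfreq δ hδ).and_eventually (eventually_ge_atTop s)).exists
      have ht0 : 0 ≤ t := le_trans hs hts
      have h1 : E s ≥ E t := hEanti hs ht0 hts
      have h2 : E t ≥ 2*β/3*(f1 t)^3 - β*(f1 t)^2 := by
        have := sq_nonneg (f2 t); rw [hEeq t]; linarith
      have h3 : |(2*β/3*(f1 t)^3 - β*(f1 t)^2) - (2*β/3*l^3 - β*l^2)| < ε := by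
        have := hδ' (show dist (f1 t) l < δ by rwa [Real.dist_eq])
        rwa [Real.dist_eq] at this
      have := abs_lt.mp h3
      linarith [this.1]
    have : 2*β/3*l^3 - β*l^2 - ε ≤ Einf :=
      le_ciInf (fun t => hstep _ (le_max_right t 0))
    linarith
  rcases eq_or_lt_of_le hlmlp with hcase | hcase
  · -- Case A : liminf = limsup, f1 converges
    have htends : Tendsto f1 atTop (𝓝 lp) :=
      tendsto_of_liminf_eq_limsup hcase rfl hBdd_le hBdd_ge
    have hl0 : 0 ≤ lp := ge_of_tendsto htends
      (by filter_upwards [eventually_ge_atTop (0:ℝ)] with t ht; exact (hpos t ht).le)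
    have hphit : Tendsto (fun t => 2*β/3*(f1 t)^3 - β*(f1 t)^2) atTop
        (𝓝 (2*β/3*lp^3 - β*lp^2)) :=
      ((htends.pow 3).const_mul (2*β/3)).sub ((htends.pow 2).const_mul β)
    have hf2sq : Tendsto (fun t => (f2 t)^2) atTop (𝓝 (Einf - (2*β/3*lp^3 - β*lp^2))) := by
      apply (hEtend.sub hphit).congr
      intro t
      rw [hEeq t]; ring
    have hs_nonneg : 0 ≤ Einf - (2*β/3*lp^3 - β*lp^2) :=
      ge_of_tendsto hf2sq (by filter_upwards with t; exact sq_nonneg _)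
    have hs_eq : Einf - (2*β/3*lp^3 - β*lp^2) = 0 := by
      by_contra hne
      have hsEpos : 0 < Einf - (2*β/3*lp^3 - β*lp^2) := lt_of_le_of_ne hs_nonneg (Ne.symm hne)
      obtain ⟨sE, hsEdef⟩ : ∃ x : ℝ, x = Einf - (2*β/3*lp^3 - β*lp^2) := ⟨_, rfl⟩
      rw [← hsEdef] at hf2sq hsEpos
      have hev : ∀ᶠ t in atTop, sE/2 < (f2 t)^2 :=
        hf2sq.eventually (eventually_gt_nhds (by linarith))
      obtain ⟨t₁', ht₁'⟩ := eventually_atTop.mp hev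
      obtain ⟨t₁, ht₁def⟩ : ∃ x : ℝ, x = max t₁' 0 := ⟨_, rfl⟩
      have ht₁0 : (0:ℝ) ≤ t₁ := by rw [ht₁def]; exact le_max_right _ _
      have ht₁ge : t₁' ≤ t₁ := by rw [ht₁def]; exact le_max_left _ _
      have hase : 0 < a * sE := mul_pos ha hsEpos
      have hnum : 0 ≤ E t₁ + β/3 := by linarith [hEinfle t₁ ht₁0, hEinf_lb]
      obtain ⟨tt, htt⟩ : ∃ x : ℝ, x = t₁ + (E t₁ + β/3 + 1)/(a*sE) := ⟨_, rfl⟩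
      have httge : t₁ ≤ tt := by
        have : 0 ≤ (E t₁ + β/3 + 1)/(a*sE) := div_nonneg (by linarith) hase.le
        rw [htt]; linarith
      have hdec := decrement E (fun u => -2 * f u * f2 u ^ 2) t₁ tt (a*sE) httge
        (fun u hu => hE' u (le_trans ht₁0 hu.1))
        (fun u hu => by
          have h1 : a ≤ f u := hfa u (le_trans ht₁0 hu.1)
          have h2 : sE/2 ≤ (f2 u)^2 := (ht₁' u (le_trans ht₁ge hu.1)).le
          show -2 * f u * f2 u ^ 2 ≤ -(a*sE)
          nlinarith)
      have hEtt : -(β/3) ≤ E tt := hphi_lbE tt (le_trans ht₁0 httge)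
      have harith : (a*sE) * (tt - t₁) = E t₁ + β/3 + 1 := by
        rw [htt]; field_simp; ring
      linarith
    rw [hs_eq] at hf2sq
    have habs : Tendsto (fun t => |f2 t|) atTop (𝓝 0) := by
      have hcomp := (Real.continuous_sqrt.tendsto 0).comp hf2sq
      rw [Real.sqrt_zero] at hcomp
      apply hcomp.congr
      intro t
      exact Real.sqrt_sq_eq_abs _
    have hf2to0 : Tendsto f2 atTop (𝓝 0) := by
      have hnegabs : Tendsto (fun t => -|f2 t|) atTop (𝓝 0) := by simpa using habs.neg
      apply tendsto_of_tendsto_of_tendsto_of_le_of_le' hnegabs habs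
      · filter_upwards with t; exact neg_abs_le _
      · filter_upwards with t; exact le_abs_self _
    rcases eq_or_lt_of_le hl0 with hlp0 | hlppos
    · -- subcase lp = 0 : contradiction via G
      exfalso
      obtain ⟨G, hGeq⟩ : ∃ G : ℝ → ℝ, ∀ y,
          G y = 2*(f y * f2 y) - f1 y ^ 2 + 2*(f y ^ 2 * f1 y) - β * f y ^ 2 :=
        ⟨_, fun _ => rfl⟩
      have hGfun : G = fun y => 2*(f y * f2 y) - f1 y ^ 2 + 2*(f y ^ 2 * f1 y) - β * f y ^ 2 :=
        funext hGeq
      have hG' : ∀ u, 0 ≤ u → HasDerivAt G (2*(2-β)*(f u)*(f1 u)^2) u := by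
        intro u hu
        rw [hGfun]
        exact G_hasDeriv β f f1 f2 f3 u (hd1 u) (hd2 u) (hd3 u) (heq u hu)
      have hGmono : MonotoneOn G (Ici 0) := by
        apply monoOn_of_hasDerivAt G _ _ (convex_Ici 0) (fun u hu => hG' u hu)
        intro u hu
        have h1 : a ≤ f u := hfa u hu
        have h2 : (0:ℝ) ≤ 2*(2-β)*f u := by nlinarith
        exact mul_nonneg h2 (sq_nonneg _)
      have hG0' : 0 ≤ G 0 := by rw [hGeq 0, hfa0]; exact hG0
      have hev1 : ∀ᶠ t in atTop, f1 t < β/4 := by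
        have h := htends
        rw [← hlp0] at h
        exact h.eventually (eventually_lt_nhds (by linarith))
      have hev2 : ∀ᶠ t in atTop, |f2 t| < a*β/8 :=
        habs.eventually (eventually_lt_nhds (by positivity))
      obtain ⟨t, h1, h2, h3⟩ := (hev1.and (hev2.and (eventually_ge_atTop (0:ℝ)))).exists
      have hft : a ≤ f t := hfa t h3
      have hftpos : 0 < f t := lt_of_lt_of_le ha hft
      have hGt : G 0 ≤ G t := hGmono self_mem_Ici h3 h3
      have hf2le : f2 t ≤ a*β/8 := le_of_lt (lt_of_abs_lt h2)
      have hf1pos : 0 < f1 t := hpos t h3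
      rw [hGeq t] at hGt
      have p1 : f t * f2 t ≤ f t * (a*β/8) := mul_le_mul_of_nonneg_left hf2le hftpos.le
      have p2 : f t * (a*β/8) ≤ f t * (f t*β/8) := by
        apply mul_le_mul_of_nonneg_left _ hftpos.le
        nlinarith
      have p3 : f t ^ 2 * f1 t ≤ f t ^ 2 * (β/4) :=
        mul_le_mul_of_nonneg_left h1.le (sq_nonneg _)
      nlinarith [sq_nonneg (f1 t), mul_pos (mul_pos hβ0 hftpos) hftpos]
    · -- subcase 0 < lp : averaging argument gives lp = 1
      have havg1 : Tendsto (fun t => f t / t) atTop (𝓝 lp) :=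
        avg_of_deriv f f1 lp (fun t _ => hd1 t) htends
      obtain ⟨g, hgeq⟩ : ∃ g : ℝ → ℝ, ∀ y, g y = f2 y + f y * f1 y := ⟨_, fun _ => rfl⟩
      have hgfun : g = fun y => f2 y + f y * f1 y := funext hgeq
      have hg' : ∀ t, 0 ≤ t → HasDerivAt g (β * f1 t + (1-β)*(f1 t)^2) t := by
        intro t ht
        rw [hgfun]
        exact g_hasDeriv β f f1 f2 f3 t (hd1 t) (hd2 t) (hd3 t) (heq t ht)
      have hgd_tend : Tendsto (fun t => β * f1 t + (1-β)*(f1 t)^2) atTop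
          (𝓝 (β*lp + (1-β)*lp^2)) :=
        (htends.const_mul β).add ((htends.pow 2).const_mul (1-β))
      have havg2 : Tendsto (fun t => g t / t) atTop (𝓝 (β*lp + (1-β)*lp^2)) :=
        avg_of_deriv g _ _ hg' hgd_tend
      have hA : Tendsto (fun t => f2 t / t) atTop (𝓝 0) := by
        apply squeeze_zero_norm' (a := fun t => K * t⁻¹)
        · filter_upwards [eventually_ge_atTop (1:ℝ)] with t ht
          have htpos : (0:ℝ) < t := by linarith
          rw [Real.norm_eq_abs, abs_div, abs_of_pos htpos, div_le_iff₀ htpos]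
          calc |f2 t| ≤ K := hK t (by linarith)
            _ = K * t⁻¹ * t := by field_simp
        · simpa using tendsto_inv_atTop_zero.const_mul K
      have hB : Tendsto (fun t => (f t / t) * f1 t) atTop (𝓝 (lp*lp)) := havg1.mul htends
      have hgt2 : Tendsto (fun t => g t / t) atTop (𝓝 (lp*lp)) := by
        have hsum := hA.add hB
        rw [zero_add] at hsum
        apply hsum.congr
        intro t
        rw [hgeq t]; ring
      have hmu : β*lp + (1-β)*lp^2 = lp*lp := tendsto_nhds_unique havg2 hgt2
      have hfac : β*(lp*(1-lp)) = 0 := by linear_combination hmu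
      have hlp1 : lp = 1 := by
        rcases mul_eq_zero.mp hfac with h | h
        · exfalso; linarith
        · rcases mul_eq_zero.mp h with h' | h'
          · exfalso; linarith
          · linarith
      rw [← hlp1]
      exact htends
  · -- Case B : liminf < limsup, contradiction
    exfalso
    have hfreq_p : ∀ δ : ℝ, 0 < δ → ∃ᶠ t in atTop, |f1 t - lp| < δ := by
      intro δ hδ
      have h1 : ∃ᶠ t in atTop, lp - δ < f1 t := frequently_lt_of_lt_limsup hCob_le (by linarith only [hδ])
      have h2 : ∀ᶠ t in atTop, f1 t < lp + δ := eventually_lt_of_limsup_lt (by linarith only [hδ]) hBdd_le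
      apply (h1.and_eventually h2).mono
      rintro t ⟨ha1, ha2⟩
      rw [abs_lt]; constructor <;> linarith only [ha1, ha2]
    have hfreq_m : ∀ δ : ℝ, 0 < δ → ∃ᶠ t in atTop, |f1 t - lm| < δ := by
      intro δ hδ
      have h1 : ∃ᶠ t in atTop, f1 t < lm + δ := frequently_lt_of_liminf_lt hCob_ge (by linarith only [hδ])
      have h2 : ∀ᶠ t in atTop, lm - δ < f1 t := eventually_lt_of_lt_liminf (by linarith only [hδ]) hBdd_ge
      apply (h1.and_eventually h2).mono
      rintro t ⟨ha1, ha2⟩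
      rw [abs_lt]; constructor <;> linarith only [ha1, ha2]
    have hEp : 2*β/3*lp^3 - β*lp^2 ≤ Einf := key lp hfreq_p
    have hEm : 2*β/3*lm^3 - β*lm^2 ≤ Einf := key lm hfreq_m
    obtain ⟨m, hm⟩ : ∃ x:ℝ, x = (lm+lp)/2 := ⟨_, rfl⟩
    obtain ⟨ε, hεdef⟩ : ∃ x:ℝ, x = (lp-lm)/8 := ⟨_, rfl⟩
    have hε : 0 < ε := by rw [hεdef]; linarith only [hcase]
    have hb1 : lm < m - ε := by rw [hm, hεdef]; linarith only [hcase]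
    have hb2 : m + ε < lp := by rw [hm, hεdef]; linarith only [hcase]
    obtain ⟨x₀, hx₀mem, hx₀max⟩ := isCompact_Icc.exists_isMaxOn (s := Icc (m-ε) (m+ε))
      (nonempty_Icc.mpr (by linarith only [hε]))
      (Continuous.continuousOn (f := fun x : ℝ => 2*β/3*x^3 - β*x^2) (by fun_prop))
    have hx₀1 : lm < x₀ := lt_of_lt_of_le hb1 hx₀mem.1
    have hx₀2 : x₀ < lp := lt_of_le_of_lt hx₀mem.2 hb2
    have hx₀lt : 2*β/3*x₀^3 - β*x₀^2 < Einf := by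
      have h1 := phi_unimodal β lm x₀ lp hβ0 h0lm hx₀1 hx₀2
      exact h1.trans_le (max_le hEm hEp)
    obtain ⟨δ, hδdef⟩ : ∃ x:ℝ, x = Einf - (2*β/3*x₀^3 - β*x₀^2) := ⟨_, rfl⟩
    have hδpos : 0 < δ := by rw [hδdef]; linarith only [hx₀lt]
    have hband : ∀ u, 0 ≤ u → m - ε ≤ f1 u → f1 u ≤ m + ε → δ ≤ (f2 u)^2 := by
      intro u hu hl hr
      have h1 : Einf ≤ E u := hEinfle u hu
      have h2 : (2*β/3*(f1 u)^3 - β*(f1 u)^2) ≤ 2*β/3*x₀^3 - β*x₀^2 := hx₀max ⟨hl, hr⟩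
      have h3 := hEeq u
      rw [hδdef]
      linarith only [h1, h2, h3]
    obtain ⟨η, hηdef⟩ : ∃ x:ℝ, x = 2*a*δ*(2*ε/(K+1)) := ⟨_, rfl⟩
    have hK1 : (0:ℝ) < K + 1 := by linarith only [hKnn]
    have hηpos : 0 < η := by rw [hηdef]; positivity
    have step : ∀ t₀, 0 ≤ t₀ → ∃ t₁, t₀ ≤ t₁ ∧ E t₁ ≤ E t₀ - η := by
      intro t₀ ht₀
      obtain ⟨p, hpf, hpt⟩ := ((frequently_lt_of_liminf_lt hCob_ge hb1).and_eventually
        (eventually_ge_atTop t₀)).exists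
      obtain ⟨q', hq'f, hq'p⟩ := ((frequently_lt_of_lt_limsup hCob_le hb2).and_eventually
        (eventually_ge_atTop p)).exists
      have hp0 : 0 ≤ p := le_trans ht₀ hpt
      obtain ⟨A, hA⟩ : ∃ S : Set ℝ, S = Icc p q' ∩ f1 ⁻¹' (Ici (m+ε)) := ⟨_, rfl⟩
      have hAq' : q' ∈ A := by rw [hA]; exact ⟨⟨hq'p, le_refl _⟩, le_of_lt hq'f⟩
      have hAcl : IsClosed A := by rw [hA]; exact isClosed_Icc.inter (isClosed_Ici.preimage hf1c)
      have hAbdd : BddBelow A := by rw [hA]; exact bddBelow_Icc.mono inter_subset_left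
      obtain ⟨q, hqdef⟩ : ∃ x:ℝ, x = sInf A := ⟨_, rfl⟩
      have hqA : q ∈ A := by rw [hqdef]; exact hAcl.csInf_mem ⟨q', hAq'⟩ hAbdd
      have hqIcc : q ∈ Icc p q' := by have := hqA; rw [hA] at this; exact this.1
      have hqf : m + ε ≤ f1 q := by have := hqA; rw [hA] at this; exact this.2
      have hpq : p < q := lt_of_le_of_ne hqIcc.1 (by intro h; rw [← h] at hqf; linarith only [hqf, hpf, hε])
      obtain ⟨Bs, hBs⟩ : ∃ S : Set ℝ, S = Icc p q ∩ f1 ⁻¹' (Iic (m-ε)) := ⟨_, rfl⟩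
      have hBp : p ∈ Bs := by rw [hBs]; exact ⟨⟨le_refl _, hpq.le⟩, hpf.le⟩
      have hBcl : IsClosed Bs := by rw [hBs]; exact isClosed_Icc.inter (isClosed_Iic.preimage hf1c)
      have hBbdd : BddAbove Bs := by rw [hBs]; exact bddAbove_Icc.mono inter_subset_left
      obtain ⟨p', hp'def⟩ : ∃ x:ℝ, x = sSup Bs := ⟨_, rfl⟩
      have hp'B : p' ∈ Bs := by rw [hp'def]; exact hBcl.csSup_mem ⟨p, hBp⟩ hBbdd
      have hp'Icc : p' ∈ Icc p q := by have := hp'B; rw [hBs] at this; exact this.1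
      have hp'f : f1 p' ≤ m - ε := by have := hp'B; rw [hBs] at this; exact this.2
      have hpp' : p ≤ p' := hp'Icc.1
      have hp'q : p' < q := lt_of_le_of_ne hp'Icc.2 (by intro h; rw [h] at hp'f; linarith only [hp'f, hqf, hε])
      have hp'0 : 0 ≤ p' := le_trans hp0 hpp'
      have hmid : Ioo p' q ⊆ f1 ⁻¹' (Icc (m-ε) (m+ε)) := by
        intro u hu
        have huIcc : u ∈ Icc p q := ⟨le_trans hpp' hu.1.le, hu.2.le⟩
        constructor
        · by_contra hc
          push_neg at hc
          have hmem : u ∈ Bs := by rw [hBs]; exact ⟨huIcc, hc.le⟩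
          have := le_csSup hBbdd hmem
          rw [← hp'def] at this
          linarith only [this, hu.1]
        · by_contra hc
          push_neg at hc
          have hmem : u ∈ A := by
            rw [hA]; exact ⟨⟨huIcc.1, le_trans huIcc.2 hqIcc.2⟩, hc.le⟩
          have := csInf_le hAbdd hmem
          rw [← hqdef] at this
          linarith only [this, hu.2]
      have hmidc : ∀ u ∈ Icc p' q, f1 u ∈ Icc (m-ε) (m+ε) := by
        intro u hu
        have hclosed : IsClosed (f1 ⁻¹' (Icc (m-ε) (m+ε))) := isClosed_Icc.preimage hf1c
        have h1 : closure (Ioo p' q) ⊆ f1 ⁻¹' (Icc (m-ε) (m+ε)) := closure_minimal hmid hclosed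
        rw [closure_Ioo (ne_of_lt hp'q)] at h1
        exact h1 hu
      have hdur : 2*ε/(K+1) ≤ q - p' := by
        have hlip := Convex.norm_image_sub_le_of_norm_deriv_le (f := f1) (s := Icc p' q) (C := K+1)
          (fun x _ => (hd2 x).differentiableAt)
          (fun x hx => by
            rw [(hd2 x).deriv]
            have : |f2 x| ≤ K := hK x (le_trans hp'0 hx.1)
            rw [Real.norm_eq_abs]; linarith only [this])
          (convex_Icc p' q) (left_mem_Icc.2 hp'q.le) (right_mem_Icc.2 hp'q.le)
        rw [Real.norm_eq_abs, Real.norm_eq_abs] at hlip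
        have h2ε : 2*ε ≤ f1 q - f1 p' := by linarith only [hqf, hp'f]
        have hchain : 2*ε ≤ (K+1)*(q-p') := by
          calc 2*ε ≤ f1 q - f1 p' := h2ε
            _ ≤ |f1 q - f1 p'| := le_abs_self _
            _ ≤ (K+1)*|q - p'| := hlip
            _ = (K+1)*(q-p') := by rw [abs_of_pos (by linarith only [hp'q] : (0:ℝ) < q - p')]
        rw [div_le_iff₀ hK1]
        linarith only [hchain]
      have hdec := decrement E (fun u => -2 * f u * f2 u ^ 2) p' q (2*a*δ) hp'q.le
        (fun u hu => hE' u (le_trans hp'0 hu.1))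
        (fun u hu => by
          have h1 : a ≤ f u := hfa u (le_trans hp'0 hu.1)
          have h2 := hband u (le_trans hp'0 hu.1) (hmidc u hu).1 (hmidc u hu).2
          show -2 * f u * f2 u ^ 2 ≤ -(2*a*δ)
          have h3 : a * δ ≤ f u * f2 u ^ 2 :=
            mul_le_mul h1 h2 hδpos.le (le_trans ha.le h1)
          linarith only [h3])
      refine ⟨q, le_trans hpt (le_trans hpp' hp'q.le), ?_⟩
      have hEp' : E p' ≤ E t₀ := hEanti ht₀ hp'0 (le_trans hpt hpp')
      have hstep2 : 2*a*δ*(2*ε/(K+1)) ≤ 2*a*δ*(q-p') :=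
        mul_le_mul_of_nonneg_left hdur (by positivity)
      rw [hηdef]
      linarith only [hdec, hstep2, hEp']
    have step' : ∀ t₀ : ℝ, ∃ t₁, t₀ ≤ t₁ ∧ (0 ≤ t₀ → E t₁ ≤ E t₀ - η) := by
      intro t₀
      rcases le_or_gt 0 t₀ with h | h
      · obtain ⟨t₁, h1, h2⟩ := step t₀ h
        exact ⟨t₁, h1, fun _ => h2⟩
      · exact ⟨t₀, le_refl _, fun h' => absurd h' (not_le.mpr h)⟩
    choose F hF1 hF2 using step'
    have hu0 : ∀ n : ℕ, 0 ≤ F^[n] 0 := by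
      intro n
      induction n with
      | zero => simp
      | succ k ih =>
        rw [Function.iterate_succ_apply']
        exact le_trans ih (hF1 _)
    have hmain : ∀ n : ℕ, E (F^[n] 0) ≤ E 0 - n * η := by
      intro n
      induction n with
      | zero => simp
      | succ k ih =>
        have h2 := hF2 (F^[k] 0) (hu0 k)
        rw [Function.iterate_succ_apply']
        push_cast
        push_cast at ih
        linarith only [ih, h2]
    obtain ⟨n, hn⟩ := exists_nat_gt ((E 0 + β/3)/η)
    have h1 := hmain n
    have h2 : -(β/3) ≤ E (F^[n] 0) := hphi_lbE _ (hu0 n)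
    rw [div_lt_iff₀ hηpos] at hn
    linarith only [h1, h2, hn]

/-- for `β ∈ (1,2]`, `a > 0`, `b > 0` and `c` with
`2ac ≥ b² - (2b - β)a²`, any solution of `f''' + f f'' + β f'(f'-1) = 0` on
`[0,T)` (`T ≤ +∞`, modelled with `T : EReal`) with `f(0) = a`, `f'(0) = b`,
`f''(0) = c` satisfies `f' > 0` on `[0,T)`; moreover if `T = +∞` then
`f'(t) → 1` as `t → +∞`. -/
theorem stmt19 (β a b c : ℝ) (hβ1 : 1 < β) (hβ2 : β ≤ 2) (ha : 0 < a)
    (hb : 0 < b) (hc : b ^ 2 - (2 * b - β) * a ^ 2 ≤ 2 * a * c)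
    (T : EReal) (hT : (0 : EReal) < T)
    (f : ℝ → ℝ) (hf : ContDiff ℝ 3 f)
    (heq : ∀ t : ℝ, 0 ≤ t → (t : EReal) < T →
      deriv (deriv (deriv f)) t + f t * deriv (deriv f) t
        + β * deriv f t * (deriv f t - 1) = 0)
    (h0 : f 0 = a) (h0' : deriv f 0 = b) (h0'' : deriv (deriv f) 0 = c) :
    (∀ t : ℝ, 0 ≤ t → (t : EReal) < T → 0 < deriv f t) ∧
    (T = ⊤ → Tendsto (deriv f) atTop (𝓝 1)) := by
  obtain ⟨hd1, hd2, hd3⟩ := smooth_unpack f hf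
  have hpart1 : ∀ t : ℝ, 0 ≤ t → (t : EReal) < T → 0 < deriv f t := by
    intro t ht htT
    have heq' : ∀ u, 0 ≤ u → u ≤ t →
        deriv (deriv (deriv f)) u + f u * deriv (deriv f) u
          + β * deriv f u * (deriv f u - 1) = 0 := by
      intro u hu0 hut
      apply heq u hu0
      exact lt_of_le_of_lt (by exact_mod_cast hut : (u:EReal) ≤ (t:EReal)) htT
    exact part1 β a b c hβ1 hβ2 ha hb hc f hd1 hd2 hd3 h0 h0' h0'' t ht heq' t ht (le_refl t)
  refine ⟨hpart1, ?_⟩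
  intro hTop
  apply part2 β a hβ1 hβ2 ha f hd1 hd2 hd3
  · intro t ht
    exact heq t ht (by rw [hTop]; exact EReal.coe_lt_top t)
  · intro t ht
    exact hpart1 t ht (by rw [hTop]; exact EReal.coe_lt_top t)
  · exact h0
  · rw [h0', h0'']
    nlinarith [hc]
end
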